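/- arXiv:2405.07247 — 3 statements merged into one kernel-verified Lean document; each statement's English description precedes it below -/
import Mathlib

section
/- Let I be a lower ideal in Φ⁺ containing Φ⁺_Θ. Then the subspace H_I = b ⊕ (⊕_{α∈I} g_{−α}) of g satisfies [p_Θ, H_I] ⊆ H_I (i.e., H_I is a p_Θ-submodule of g) if and only if I is an upper ideal with respect to Θ. -/
open scoped Classical

noncomputable section

variable (V : Type) [AddCommGroup V] [Module ℚ V]

/-- A finite reduced crystallographic root system `Φ` spanning the `ℚ`-vector space `V`,
together with a fixed system of positive roots `Pos`, the corresponding set of simple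
roots `Δ`, the coroots `coroot α` (so that the reflection associated to `α` is
`x ↦ x - coroot α x • α`), and `coeff α δ`, the (unique, by linear independence of `Δ`)
nonnegative integral coefficient of the simple root `δ` in the expression of the
positive root `α` as a combination of simple roots. -/
structure RootSystemData where
  Φ : Finset V
  Pos : Finset V
  Δ : Finset V
  coeff : V → V → ℕ
  coroot : V → V →ₗ[ℚ] ℚ
  span_eq_top : Submodule.span ℚ (Φ : Set V) = ⊤
  root_ne_zero : ∀ α ∈ Φ, α ≠ (0 : V)
  reduced : ∀ α ∈ Φ, ∀ c : ℚ, c • α ∈ Φ → c = 1 ∨ c = -1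
  coroot_self : ∀ α ∈ Φ, coroot α α = 2
  reflect_mem : ∀ α ∈ Φ, ∀ β ∈ Φ, β - coroot α β • α ∈ Φ
  crystallographic : ∀ α ∈ Φ, ∀ β ∈ Φ, ∃ n : ℤ, coroot α β = (n : ℚ)
  pos_subset : Pos ⊆ Φ
  pos_or_neg : ∀ α ∈ Φ, α ∈ Pos ∨ -α ∈ Pos
  pos_not_neg : ∀ α ∈ Pos, -α ∉ Pos
  simple_subset : Δ ⊆ Pos
  simple_indep : LinearIndependent ℚ (fun δ : (Δ : Set V) => (δ : V))
  pos_combo : ∀ α ∈ Pos, α = ∑ δ ∈ Δ, (coeff α δ : ℚ) • δ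

variable {V}

/-- `I` is a lower ideal in the set `Pos` of positive roots. -/
def IsLowerIdealOf (Pos I : Finset V) : Prop :=
  I ⊆ Pos ∧ ∀ α ∈ I, ∀ β ∈ Pos, α - β ∈ Pos → α - β ∈ I

/-- `Φ⁺_Θ`: the positive roots that are `ℤ`-linear combinations of roots in `Θ`. -/
def posThetaOf (Pos Θ : Finset V) : Finset V :=
  Pos.filter fun α => ∃ c : V → ℤ, α = ∑ δ ∈ Θ, (c δ : ℚ) • δ

/-- `I` is an upper ideal with respect to `Θ`. -/
def IsUpperIdealWrt (Pos Θ I : Finset V) : Prop :=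
  ∀ α ∈ I, ∀ β ∈ posThetaOf Pos Θ, α + β ∈ Pos → α + β ∈ I

/-- `I` is a `Θ`-ideal. -/
def IsThetaIdealOf (Pos Θ I : Finset V) : Prop :=
  IsLowerIdealOf Pos I ∧ IsUpperIdealWrt Pos Θ I ∧ posThetaOf Pos Θ ⊆ I

/-- The partial order `α ≼_Θ β`: `β - α` is a (possibly empty) sum of
positive roots belonging to `Φ⁺_Θ`. -/
def leTheta (Pos Θ : Finset V) (α β : V) : Prop :=
  ∃ m : Multiset V, (∀ γ ∈ m, γ ∈ posThetaOf Pos Θ) ∧ β - α = m.sum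

/-- `Y` is a Weyl type subset of the lower ideal `I`. -/
def IsWeylType (I Y : Finset V) : Prop :=
  Y ⊆ I ∧ (∀ α ∈ Y, ∀ β ∈ Y, α + β ∈ I → α + β ∈ Y) ∧
    ∀ γ ∈ I, ∀ δ ∈ I, γ ∉ Y → δ ∉ Y → γ + δ ∈ I → γ + δ ∉ Y

/-- `g` is the reflection `s_α` associated to the root `α`. -/
def IsReflectionOf (D : RootSystemData V) (α : V) (g : V ≃ₗ[ℚ] V) : Prop :=
  ∀ x, g x = x - D.coroot α x • α

/-- The Weyl group `W`, generated by the reflections `s_α` for `α ∈ Φ`. -/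
def WeylGroup (D : RootSystemData V) : Subgroup (V ≃ₗ[ℚ] V) :=
  Subgroup.closure {g | ∃ α ∈ D.Φ, IsReflectionOf D α g}

/-- The parabolic subgroup `W_Θ` generated by the reflections `s_α` for `α ∈ Θ`. -/
def WThetaGroup (D : RootSystemData V) (Θ : Finset V) : Subgroup (V ≃ₗ[ℚ] V) :=
  Subgroup.closure {g | ∃ α ∈ Θ, IsReflectionOf D α g}

/-- The length `ℓ(w)`: the smallest number of simple reflections needed to write `w`. -/
noncomputable def len (D : RootSystemData V) (w : V ≃ₗ[ℚ] V) : ℕ :=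
  sInf {p : ℕ | ∃ l : List (V ≃ₗ[ℚ] V), l.length = p ∧
    (∀ g ∈ l, ∃ α ∈ D.Δ, IsReflectionOf D α g) ∧ l.prod = w}

/-- `N(w) = {α ∈ Φ⁺ : w(α) ∈ Φ⁻}` (where `Φ⁻ = -Φ⁺`). -/
def negSet (D : RootSystemData V) (w : V ≃ₗ[ℚ] V) : Finset V :=
  D.Pos.filter fun α => -(w α) ∈ D.Pos

/-- `W^Θ`, the set of minimal length left coset representatives:
`{w ∈ W : ℓ(w) < ℓ(w s_α) for all α ∈ Θ}`. -/
def minCosetReps (D : RootSystemData V) (Θ : Finset V) : Set (V ≃ₗ[ℚ] V) :=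
  {w | w ∈ WeylGroup D ∧ ∀ g : V ≃ₗ[ℚ] V,
    (∃ α ∈ Θ, IsReflectionOf D α g) → len D w < len D (w * g)}

/-- The height `ht(α)` of a positive root: the sum of its coefficients over the simple roots. -/
def rootHt (D : RootSystemData V) (α : V) : ℕ := ∑ δ ∈ D.Δ, D.coeff α δ


variable (V) in
/-- The root space decomposition of a complex semisimple Lie algebra `L` with Cartan
subalgebra `h` and root spaces `gs α` (for `α ∈ Φ`), packaged with its standard
properties: the root spaces are nonzero, `⁅h, h⁆ ⊆ h`, `⁅h, g_α⁆ ⊆ g_α`,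
`⁅g_α, g_β⁆ = g_{α+β}` when `α + β ∈ Φ`, `⁅g_α, g_{−α}⁆ ⊆ h`, `⁅g_α, g_β⁆ = 0` when
`α + β ∉ Φ ∪ {0}`, and the root spaces are independent of each other and of `h`. -/
structure LieRootDecomp (D : RootSystemData V)
    (L : Type) [LieRing L] [LieAlgebra ℂ L] where
  h : Submodule ℂ L
  gs : V → Submodule ℂ L
  gs_ne_bot : ∀ α ∈ D.Φ, gs α ≠ ⊥
  bracket_h_h : ∀ x ∈ h, ∀ y ∈ h, ⁅x, y⁆ ∈ h
  bracket_h_gs : ∀ α ∈ D.Φ, ∀ x ∈ h, ∀ y ∈ gs α, ⁅x, y⁆ ∈ gs α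
  bracket_gs_mem : ∀ α ∈ D.Φ, ∀ β ∈ D.Φ, α + β ∈ D.Φ →
    ∀ x ∈ gs α, ∀ y ∈ gs β, ⁅x, y⁆ ∈ gs (α + β)
  bracket_gs_neg : ∀ α ∈ D.Φ, ∀ x ∈ gs α, ∀ y ∈ gs (-α), ⁅x, y⁆ ∈ h
  bracket_gs_zero : ∀ α ∈ D.Φ, ∀ β ∈ D.Φ, α + β ∉ D.Φ → α + β ≠ 0 →
    ∀ x ∈ gs α, ∀ y ∈ gs β, ⁅x, y⁆ = (0 : L)
  bracket_gs_eq : ∀ α ∈ D.Φ, ∀ β ∈ D.Φ, α + β ∈ D.Φ →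
    gs (α + β) ≤ Submodule.span ℂ {z : L | ∃ x ∈ gs α, ∃ y ∈ gs β, z = ⁅x, y⁆}
  indep : ∀ α ∈ D.Φ, ∀ S : Set V, S ⊆ (D.Φ : Set V) → α ∉ S →
    Disjoint (gs α) (h ⊔ ⨆ β ∈ S, gs β)

variable {D : RootSystemData V} {L : Type} [LieRing L] [LieAlgebra ℂ L]

/-- The Borel subalgebra `b = h ⊕ (⊕_{γ ∈ Φ⁺} g_γ)`, as a subspace of `L`. -/
def borelSub (E : LieRootDecomp V D L) : Submodule ℂ L :=
  E.h ⊔ ⨆ γ ∈ D.Pos, E.gs γ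

/-- The standard parabolic subalgebra `p_Θ = b ⊕ (⊕_{β ∈ Φ⁺_Θ} g_{−β})`. -/
def parabolicSub (E : LieRootDecomp V D L) (Θ : Finset V) : Submodule ℂ L :=
  borelSub E ⊔ ⨆ β ∈ posThetaOf D.Pos Θ, E.gs (-β)

/-- `H_I = b ⊕ (⊕_{α ∈ I} g_{−α})`. -/
def hessSub (E : LieRootDecomp V D L) (I : Finset V) : Submodule ℂ L :=
  borelSub E ⊔ ⨆ α ∈ I, E.gs (-α)

section Aux

variable {D : RootSystemData V}

lemma neg_mem_Phi {α : V} (hα : α ∈ D.Φ) : -α ∈ D.Φ := by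
  have h := D.reflect_mem α hα α hα
  rw [D.coroot_self α hα] at h
  have : α - (2 : ℚ) • α = -α := by
    rw [two_smul]; abel
  rwa [this] at h

lemma simple_coeff_zero (f : V → ℚ) (h : ∑ δ ∈ D.Δ, f δ • δ = 0) :
    ∀ δ ∈ D.Δ, f δ = 0 := by
  intro δ hδ
  have hli := linearIndependent_iff'.mp D.simple_indep
  have hsum : ∑ i : (D.Δ : Set V), f i • (i : V) = 0 := by
    rw [← Finset.sum_coe_sort D.Δ (fun x => f x • x)] at h
    exact h
  exact hli Finset.univ (fun i => f i) hsum ⟨δ, by exact_mod_cast hδ⟩ (Finset.mem_univ _)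

lemma sum_pos_mem {α β : V} (hα : α ∈ D.Pos) (hβ : β ∈ D.Pos)
    (hsum : α + β ∈ D.Φ) : α + β ∈ D.Pos := by
  rcases D.pos_or_neg _ hsum with h | h
  · exact h
  · exfalso
    have ha := D.pos_combo α hα
    have hb := D.pos_combo β hβ
    have hc := D.pos_combo _ h
    have hzero : ∑ δ ∈ D.Δ, ((D.coeff α δ : ℚ) + (D.coeff β δ : ℚ) + (D.coeff (-(α+β)) δ : ℚ)) • δ = 0 := by
      simp only [add_smul, Finset.sum_add_distrib]
      rw [← ha, ← hb, ← hc]; abel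
    have hz := simple_coeff_zero _ hzero
    have hαz : α = 0 := by
      rw [ha]
      apply Finset.sum_eq_zero
      intro δ hδ
      have h0 := hz δ hδ
      have h1 : D.coeff α δ = 0 := by
        have : ((D.coeff α δ + D.coeff β δ + D.coeff (-(α+β)) δ : ℕ) : ℚ) = 0 := by
          push_cast; linarith
        have := Nat.cast_eq_zero.mp this
        omega
      rw [h1, Nat.cast_zero, zero_smul]
    exact D.root_ne_zero α (D.pos_subset hα) hαz

end Aux
lemma classP_mem_Phi {S : Finset V} (hS : S ⊆ D.Pos) {μ : V}
    (h : μ ∈ D.Pos ∨ ∃ α ∈ S, μ = -α) : μ ∈ D.Φ := by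
  rcases h with h | ⟨α, hα, rfl⟩
  · exact D.pos_subset h
  · exact neg_mem_Phi (D.pos_subset (hS hα))

lemma class_add {Θ I : Finset V} (hI : IsLowerIdealOf D.Pos I)
    (hsub : posThetaOf D.Pos Θ ⊆ I) (hupper : IsUpperIdealWrt D.Pos Θ I) {μ ν : V}
    (hμ : μ ∈ D.Pos ∨ ∃ β ∈ posThetaOf D.Pos Θ, μ = -β)
    (hν : ν ∈ D.Pos ∨ ∃ α ∈ I, ν = -α)
    (hs : μ + ν ∈ D.Φ) : μ + ν ∈ D.Pos ∨ ∃ α ∈ I, μ + ν = -α := by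
  rcases hμ with hμ | ⟨β, hβ, rfl⟩
  · rcases hν with hν | ⟨α, hα, rfl⟩
    · exact Or.inl (sum_pos_mem hμ hν hs)
    · rcases D.pos_or_neg _ hs with h | h
      · exact Or.inl h
      · have heq : -(μ + -α) = α - μ := by abel
        rw [heq] at h
        have := hI.2 α hα μ hμ h
        exact Or.inr ⟨α - μ, this, by abel⟩
  · rcases hν with hν | ⟨α, hα, rfl⟩
    · rcases D.pos_or_neg _ hs with h | h
      · exact Or.inl h
      · have heq : -(-β + ν) = β - ν := by abel
        rw [heq] at h
        have := hI.2 β (hsub hβ) ν hν h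
        exact Or.inr ⟨β - ν, this, by abel⟩
    · rcases D.pos_or_neg _ hs with h | h
      · exact Or.inl h
      · have heq : -(-β + -α) = α + β := by abel
        rw [heq] at h
        have := hupper α hα β hβ h
        exact Or.inr ⟨α + β, this, by abel⟩

lemma gs_le_hess (E : LieRootDecomp V D L) {I : Finset V} {γ : V}
    (h : γ ∈ D.Pos ∨ ∃ α ∈ I, γ = -α) : E.gs γ ≤ hessSub E I := by
  rcases h with h | ⟨α, hα, rfl⟩
  · exact le_trans (le_iSup₂ (f := fun γ (_ : γ ∈ D.Pos) => E.gs γ) γ h)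
      (le_trans le_sup_right le_sup_left)
  · exact le_trans (le_iSup₂ (f := fun α (_ : α ∈ I) => E.gs (-α)) α hα) le_sup_right

lemma h_le_hess (E : LieRootDecomp V D L) {I : Finset V} : E.h ≤ hessSub E I :=
  le_trans le_sup_left le_sup_left

lemma core_bracket (E : LieRootDecomp V D L) {Θ I : Finset V}
    (hI : IsLowerIdealOf D.Pos I) (hsub : posThetaOf D.Pos Θ ⊆ I)
    (hupper : IsUpperIdealWrt D.Pos Θ I) {x y : L}
    (hx : x ∈ E.h ∨ ∃ μ, x ∈ E.gs μ ∧ (μ ∈ D.Pos ∨ ∃ β ∈ posThetaOf D.Pos Θ, μ = -β))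
    (hy : y ∈ E.h ∨ ∃ ν, y ∈ E.gs ν ∧ (ν ∈ D.Pos ∨ ∃ α ∈ I, ν = -α)) :
    ⁅x, y⁆ ∈ hessSub E I := by
  have hΘPos : posThetaOf D.Pos Θ ⊆ D.Pos := Finset.filter_subset _ _
  rcases hx with hx | ⟨μ, hxμ, hμ⟩
  · rcases hy with hy | ⟨ν, hyν, hν⟩
    · exact h_le_hess E (E.bracket_h_h x hx y hy)
    · have hνΦ : ν ∈ D.Φ := classP_mem_Phi hI.1 hν
      exact gs_le_hess E hν (E.bracket_h_gs ν hνΦ x hx y hyν)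
  · have hμΦ : μ ∈ D.Φ := classP_mem_Phi hΘPos hμ
    have hμ' : μ ∈ D.Pos ∨ ∃ α ∈ I, μ = -α := by
      rcases hμ with h | ⟨β, hβ, rfl⟩
      · exact Or.inl h
      · exact Or.inr ⟨β, hsub hβ, rfl⟩
    rcases hy with hy | ⟨ν, hyν, hν⟩
    · have : ⁅x, y⁆ = -⁅y, x⁆ := (lie_skew x y).symm
      rw [this]
      exact neg_mem (gs_le_hess E hμ' (E.bracket_h_gs μ hμΦ y hy x hxμ))
    · have hνΦ : ν ∈ D.Φ := classP_mem_Phi hI.1 hν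
      by_cases h0 : μ + ν = 0
      · have hνeq : ν = -μ := eq_neg_of_add_eq_zero_right h0
        rw [hνeq] at hyν
        exact h_le_hess E (E.bracket_gs_neg μ hμΦ x hxμ y hyν)
      · by_cases hΦ : μ + ν ∈ D.Φ
        · exact gs_le_hess E (class_add hI hsub hupper hμ hν hΦ)
            (E.bracket_gs_mem μ hμΦ ν hνΦ hΦ x hxμ y hyν)
        · rw [E.bracket_gs_zero μ hμΦ ν hνΦ hΦ h0 x hxμ y hyν]
          exact zero_mem _
/-- Let `I` be a lower ideal in `Φ⁺` containing `Φ⁺_Θ`. Then the subspace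
`H_I = b ⊕ (⊕_{α∈I} g_{−α})` of `g` satisfies `⁅p_Θ, H_I⁆ ⊆ H_I` (i.e. `H_I` is a
`p_Θ`-submodule of `g`) if and only if `I` is an upper ideal with respect to `Θ`. -/
theorem hessSub_bracket_closed_iff_upperIdeal
    (E : LieRootDecomp V D L) (Θ : Finset V) (hΘ : Θ ⊆ D.Δ)
    (I : Finset V) (hI : IsLowerIdealOf D.Pos I)
    (hsub : posThetaOf D.Pos Θ ⊆ I) :
    (∀ x ∈ parabolicSub E Θ, ∀ y ∈ hessSub E I, ⁅x, y⁆ ∈ hessSub E I) ↔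
      IsUpperIdealWrt D.Pos Θ I := by
  constructor
  · -- closure ⇒ upper ideal
    intro hbr α hαI β hβΘ hαβ
    by_contra hnot
    have hαβΦ : α + β ∈ D.Φ := D.pos_subset hαβ
    have hnegΦ : -(α + β) ∈ D.Φ := neg_mem_Phi hαβΦ
    have hβΦ : (-β : V) ∈ D.Φ :=
      neg_mem_Phi (D.pos_subset (Finset.filter_subset _ _ hβΘ))
    have hαΦ : (-α : V) ∈ D.Φ := neg_mem_Phi (D.pos_subset (hI.1 hαI))
    have heq : -β + -α = -(α + β) := by abel
    have hsumΦ : -β + -α ∈ D.Φ := by rw [heq]; exact hnegΦ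
    have hspan := E.bracket_gs_eq (-β) hβΦ (-α) hαΦ hsumΦ
    have hle : E.gs (-β + -α) ≤ hessSub E I := by
      refine le_trans hspan (Submodule.span_le.mpr ?_)
      rintro z ⟨x, hx, y, hy, rfl⟩
      have hxp : x ∈ parabolicSub E Θ :=
        le_sup_right (a := borelSub E)
          (le_iSup₂ (f := fun β (_ : β ∈ posThetaOf D.Pos Θ) => E.gs (-β)) β hβΘ hx)
      have hyh : y ∈ hessSub E I := gs_le_hess E (Or.inr ⟨α, hαI, rfl⟩) hy
      exact hbr x hxp y hyh
    rw [heq] at hle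
    set S : Set V := ↑D.Pos ∪ (fun a => -a) '' ↑I with hS
    have hSsub : S ⊆ (D.Φ : Set V) := by
      rintro γ (hγ | ⟨a, ha, rfl⟩)
      · exact D.pos_subset hγ
      · exact neg_mem_Phi (D.pos_subset (hI.1 (by exact_mod_cast ha)))
    have hnotin : -(α + β) ∉ S := by
      rintro (h | ⟨a, ha, hEq⟩)
      · exact D.pos_not_neg _ hαβ h
      · have : α + β = a := by
          have := neg_injective hEq
          exact this.symm
        rw [this] at hnot
        exact hnot (by exact_mod_cast ha)
    have hdisj := E.indep _ hnegΦ S hSsub hnotin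
    have hhess_le : hessSub E I ≤ E.h ⊔ ⨆ γ ∈ S, E.gs γ := by
      refine sup_le (sup_le le_sup_left ?_) ?_
      · refine iSup₂_le fun γ hγ => ?_
        exact le_trans (le_iSup₂ (f := fun γ (_ : γ ∈ S) => E.gs γ) γ (Or.inl hγ)) le_sup_right
      · refine iSup₂_le fun a ha => ?_
        exact le_trans (le_iSup₂ (f := fun γ (_ : γ ∈ S) => E.gs γ) (-a)
          (Or.inr ⟨a, by exact_mod_cast ha, rfl⟩)) le_sup_right
    have hbot : E.gs (-(α + β)) = ⊥ :=
      Disjoint.eq_bot_of_le hdisj (le_trans hle hhess_le)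
    exact E.gs_ne_bot _ hnegΦ hbot
  · -- upper ideal ⇒ closure
    intro hupper
    have key : ∀ x : L,
        (x ∈ E.h ∨ ∃ μ, x ∈ E.gs μ ∧ (μ ∈ D.Pos ∨ ∃ β ∈ posThetaOf D.Pos Θ, μ = -β)) →
        ∀ y ∈ hessSub E I, ⁅x, y⁆ ∈ hessSub E I := by
      intro x hx
      let M : Submodule ℂ L :=
        { carrier := {y | ⁅x, y⁆ ∈ hessSub E I}
          add_mem' := fun {a b} ha hb => by
            simp only [Set.mem_setOf_eq, lie_add] at *
            exact add_mem ha hb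
          zero_mem' := by
            simp only [Set.mem_setOf_eq, lie_zero]
            exact zero_mem _
          smul_mem' := fun c a ha => by
            simp only [Set.mem_setOf_eq, lie_smul] at *
            exact Submodule.smul_mem _ c ha }
      have hM : hessSub E I ≤ M := by
        refine sup_le (sup_le ?_ ?_) ?_
        · intro y hy
          exact core_bracket E hI hsub hupper hx (Or.inl hy)
        · refine iSup₂_le fun γ hγ => ?_
          intro y hy
          exact core_bracket E hI hsub hupper hx (Or.inr ⟨γ, hy, Or.inl hγ⟩)
        · refine iSup₂_le fun a ha => ?_
          intro y hy
          exact core_bracket E hI hsub hupper hx (Or.inr ⟨-a, hy, Or.inr ⟨a, ha, rfl⟩⟩)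
      exact fun y hy => hM hy
    intro x hx
    let N : Submodule ℂ L :=
      { carrier := {x | ∀ y ∈ hessSub E I, ⁅x, y⁆ ∈ hessSub E I}
        add_mem' := fun {a b} ha hb => by
          intro y hy
          rw [add_lie]
          exact add_mem (ha y hy) (hb y hy)
        zero_mem' := fun y hy => by
          rw [zero_lie]
          exact zero_mem _
        smul_mem' := fun c a ha y hy => by
          rw [smul_lie]
          exact Submodule.smul_mem _ c (ha y hy) }
    have hN : parabolicSub E Θ ≤ N := by
      refine sup_le (sup_le ?_ ?_) ?_
      · intro x' hx'
        exact key x' (Or.inl hx')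
      · refine iSup₂_le fun γ hγ => ?_
        intro x' hx'
        exact key x' (Or.inr ⟨γ, hx', Or.inl hγ⟩)
      · refine iSup₂_le fun b hb => ?_
        intro x' hx'
        exact key x' (Or.inr ⟨-b, hx', Or.inr ⟨b, hb, rfl⟩⟩)
    exact hN hx

end
end

section
/- Let I be a lower ideal in Φ⁺. Then the map w ↦ N(w) ∩ I is a bijection from {w ∈ W : w⁻¹(Δ) ⊆ (−I) ∪ Φ⁺} onto the set W^I of Weyl type subsets of I. -/
open scoped Classical

noncomputable section

variable (V : Type) [AddCommGroup V] [Module ℚ V]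

variable {V}

/-!
The inversion set `N(w)` of `w ∈ W` is biconvex: closed under sums that are roots, with complement
in `Φ⁺` closed as well. Hence `N(w) ∩ I` is of Weyl type. Conversely every biconvex subset of `Φ⁺`
is an inversion set: it contains a simple root `δ`, and removing `δ` and applying `s_δ` gives a
smaller biconvex set. Finally `N(w)` determines `w`.

If `w⁻¹(Δ) ⊆ (−I) ∪ Φ⁺`, then by induction on the height of `-w(α)` every `α ∈ N(w)` is a sum of
elements of `N(w) ∩ I`, so `N(w)` is recovered from its trace on `I`; this gives injectivity. For
surjectivity, the positive roots that are sums of elements of a Weyl type set `Y` form a biconvex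
set meeting `I` exactly in `Y`, and the `w` realising it satisfies the condition on `w⁻¹(Δ)`
because a simple root is not a sum of two positive roots.

Throughout, the combinatorics rests on one fact: two roots at an acute angle for a `W`-invariant
inner product differ by a root.
-/

section

variable {V : Type} [AddCommGroup V]

lemma IsLowerIdealOf.mem_of_add_mem {Pos I : Finset V} (hI : IsLowerIdealOf Pos I) {u v : V}
    (hu : u ∈ Pos) (hv : v ∈ Pos) (h : u + v ∈ I) : u ∈ I := by
  simpa using hI.2 _ h v hv (by simpa using hu)

lemma IsWeylType.mem_or_mem_of_add_mem {Pos I Y : Finset V} (hI : IsLowerIdealOf Pos I)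
    (hY : IsWeylType I Y) {u v : V} (hu : u ∈ Pos) (hv : v ∈ Pos) (h : u + v ∈ Y) :
    u ∈ Y ∨ v ∈ Y := by
  have huv := hY.1 h
  by_contra! hn
  exact hY.2.2 u (hI.mem_of_add_mem hu hv huv) v
    (hI.mem_of_add_mem hv hu (add_comm u v ▸ huv)) hn.1 hn.2 huv h

end

namespace RootSystemData

variable {V : Type} [AddCommGroup V] [Module ℚ V] (D : RootSystemData V)

lemma neg_mem {α : V} (hα : α ∈ D.Φ) : -α ∈ D.Φ := by
  simpa [D.coroot_self α hα, two_smul] using D.reflect_mem α hα α hα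

lemma mem_pos_of_neg_notMem_pos {α : V} (hα : α ∈ D.Φ) (h : -α ∉ D.Pos) : α ∈ D.Pos :=
  (D.pos_or_neg α hα).resolve_right h

lemma simple_mem {δ : V} (hδ : δ ∈ D.Δ) : δ ∈ D.Φ := D.pos_subset (D.simple_subset hδ)

/-! ### Coordinates and heights with respect to the simple roots -/

lemma top_le_span_simple : ⊤ ≤ Submodule.span ℚ (Set.range ((↑) : D.Δ → V)) := by
  have hpos : ∀ α ∈ D.Pos, α ∈ Submodule.span ℚ (Set.range ((↑) : D.Δ → V)) := fun α hα => by
    rw [D.pos_combo α hα]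
    exact Submodule.sum_mem _ fun δ hδ =>
      Submodule.smul_mem _ _ (Submodule.subset_span ⟨⟨δ, hδ⟩, rfl⟩)
  rw [← D.span_eq_top, Submodule.span_le]
  intro α hα
  rcases D.pos_or_neg α hα with h | h
  · exact hpos α h
  · simpa using Submodule.neg_mem _ (hpos _ h)

def simpleBasis : Module.Basis D.Δ ℚ V := .mk D.simple_indep D.top_le_span_simple

lemma simpleBasis_apply (i : D.Δ) : D.simpleBasis i = i := Module.Basis.mk_apply _ _ _

lemma exists_coord_ne_zero {x : V} (hx : x ≠ 0) : ∃ i, D.simpleBasis.coord i x ≠ 0 := by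
  by_contra! h
  exact hx (D.simpleBasis.forall_coord_eq_zero_iff.mp h)

lemma coord_simple (i j : D.Δ) : D.simpleBasis.coord i j = if j = i then 1 else 0 := by
  rw [← D.simpleBasis_apply j, Module.Basis.coord_apply, Module.Basis.repr_self_apply]

lemma coord_eq_coeff {α : V} (hα : α ∈ D.Pos) (i : D.Δ) :
    D.simpleBasis.coord i α = D.coeff α i := by
  have : α = ∑ j : D.Δ, (D.coeff α j : ℚ) • D.simpleBasis j := by
    simp only [simpleBasis_apply]
    rw [Finset.sum_coe_sort D.Δ (fun j => (D.coeff α j : ℚ) • j)]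
    exact D.pos_combo α hα
  conv_lhs => rw [this]
  rw [Module.Basis.coord_apply, Module.Basis.repr_sum_self]

lemma coord_nonneg {α : V} (hα : α ∈ D.Pos) (i : D.Δ) : 0 ≤ D.simpleBasis.coord i α := by
  rw [D.coord_eq_coeff hα]
  positivity

lemma mem_pos_of_coord_pos {α : V} (hα : α ∈ D.Φ) {i : D.Δ}
    (hi : 0 < D.simpleBasis.coord i α) : α ∈ D.Pos := by
  refine D.mem_pos_of_neg_notMem_pos hα fun h => ?_
  have := D.coord_nonneg h i
  rw [map_neg] at this
  linarith

lemma mem_pos_of_coord_nonneg {α : V} (hα : α ∈ D.Φ) (h : ∀ i, 0 ≤ D.simpleBasis.coord i α) :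
    α ∈ D.Pos := by
  obtain ⟨i, hi⟩ := D.exists_coord_ne_zero (D.root_ne_zero α hα)
  exact D.mem_pos_of_coord_pos hα ((h i).lt_of_ne' hi)

lemma add_mem_pos {α β : V} (hα : α ∈ D.Pos) (hβ : β ∈ D.Pos) (h : α + β ∈ D.Φ) :
    α + β ∈ D.Pos :=
  D.mem_pos_of_coord_nonneg h fun i => by
    rw [map_add]
    exact add_nonneg (D.coord_nonneg hα i) (D.coord_nonneg hβ i)

lemma multiset_sum_mem_pos {m : Multiset V} (hm : ∀ γ ∈ m, γ ∈ D.Pos) (h : m.sum ∈ D.Φ) :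
    m.sum ∈ D.Pos :=
  D.mem_pos_of_coord_nonneg h fun i => by
    rw [map_multiset_sum]
    exact Multiset.sum_nonneg fun x hx => by
      obtain ⟨γ, hγ, rfl⟩ := Multiset.mem_map.mp hx
      exact D.coord_nonneg (hm γ hγ) i

def height : V →ₗ[ℚ] ℚ := D.simpleBasis.sumCoords

lemma height_eq_sum (x : V) : D.height x = ∑ i, D.simpleBasis.coord i x := by
  simp [height]

lemma height_simple (i : D.Δ) : D.height i = 1 := by
  rw [← D.simpleBasis_apply, height, Module.Basis.sumCoords_self_apply]

lemma natCast_rootHt {α : V} (hα : α ∈ D.Pos) : (rootHt D α : ℚ) = D.height α := by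
  simp only [rootHt, Nat.cast_sum, height_eq_sum, D.coord_eq_coeff hα]
  exact (Finset.sum_coe_sort D.Δ (fun j => (D.coeff α j : ℚ))).symm

lemma rootHt_lt_rootHt_iff {α β : V} (hα : α ∈ D.Pos) (hβ : β ∈ D.Pos) :
    rootHt D α < rootHt D β ↔ D.height α < D.height β := by
  rw [← D.natCast_rootHt hα, ← D.natCast_rootHt hβ, Nat.cast_lt]

lemma height_pos {α : V} (hα : α ∈ D.Pos) : 0 < D.height α := by
  obtain ⟨i, hi⟩ := D.exists_coord_ne_zero (D.root_ne_zero α (D.pos_subset hα))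
  rw [height_eq_sum]
  exact Finset.sum_pos' (fun j _ => D.coord_nonneg hα j)
    ⟨i, Finset.mem_univ i, (D.coord_nonneg hα i).lt_of_ne' hi⟩

lemma one_le_height {α : V} (hα : α ∈ D.Pos) : 1 ≤ D.height α := by
  have h := D.height_pos hα
  rw [← D.natCast_rootHt hα] at h ⊢
  exact Nat.one_le_cast.mpr (Nat.cast_pos.mp h)

lemma rootHt_lt_of_add_eq {α β γ : V} (hα : α ∈ D.Pos) (hβ : β ∈ D.Pos) (hγ : γ ∈ D.Pos)
    (h : α + β = γ) : rootHt D α < rootHt D γ := by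
  rw [D.rootHt_lt_rootHt_iff hα hγ, ← h, map_add]
  linarith [D.height_pos hβ]

lemma add_notMem_simple {α β : V} (hα : α ∈ D.Pos) (hβ : β ∈ D.Pos) : α + β ∉ D.Δ := by
  intro h
  have := D.height_simple ⟨_, h⟩
  rw [map_add] at this
  linarith [D.one_le_height hα, D.one_le_height hβ]

lemma multiset_sum_ne_zero {m : Multiset V} (hm : ∀ γ ∈ m, γ ∈ D.Pos) (hne : m ≠ 0) :
    m.sum ≠ 0 := by
  intro h
  obtain ⟨a, ha⟩ := Multiset.exists_mem_of_ne_zero hne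
  have hle := Multiset.single_le_sum (s := m.map D.height) (fun x hx => by
    obtain ⟨γ, hγ, rfl⟩ := Multiset.mem_map.mp hx
    exact (D.height_pos (hm γ hγ)).le) _ (Multiset.mem_map_of_mem _ ha)
  rw [← map_multiset_sum, h, map_zero] at hle
  linarith [D.height_pos (hm a ha)]

/-! ### Reflections and the Weyl group -/

def reflection (α : V) (hα : α ∈ D.Φ) : V ≃ₗ[ℚ] V := Module.reflection (D.coroot_self α hα)

lemma reflection_apply {α : V} (hα : α ∈ D.Φ) (x : V) :
    D.reflection α hα x = x - D.coroot α x • α :=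
  Module.reflection_apply x _

lemma reflection_apply_self {α : V} (hα : α ∈ D.Φ) : D.reflection α hα α = -α :=
  Module.reflection_apply_self _

lemma reflection_reflection {α : V} (hα : α ∈ D.Φ) (x : V) :
    D.reflection α hα (D.reflection α hα x) = x :=
  Module.involutive_reflection _ x

lemma reflection_mul_self {α : V} (hα : α ∈ D.Φ) :
    D.reflection α hα * D.reflection α hα = 1 :=
  LinearEquiv.ext (D.reflection_reflection hα)

lemma reflection_mem {α β : V} (hα : α ∈ D.Φ) (hβ : β ∈ D.Φ) : D.reflection α hα β ∈ D.Φ :=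
  D.reflect_mem α hα β hβ

lemma isReflectionOf_iff {α : V} (hα : α ∈ D.Φ) {g : V ≃ₗ[ℚ] V} :
    IsReflectionOf D α g ↔ g = D.reflection α hα := by
  simp only [IsReflectionOf, LinearEquiv.ext_iff, reflection_apply]

lemma reflection_mem_weylGroup {α : V} (hα : α ∈ D.Φ) : D.reflection α hα ∈ WeylGroup D :=
  Subgroup.subset_closure ⟨α, hα, (D.isReflectionOf_iff hα).mpr rfl⟩

lemma apply_mem_iff {w : V ≃ₗ[ℚ] V} (hw : w ∈ WeylGroup D) {α : V} : w α ∈ D.Φ ↔ α ∈ D.Φ := by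
  induction hw using Subgroup.closure_induction generalizing α with
  | mem g hg =>
    obtain ⟨β, hβ, hg⟩ := hg
    rw [(D.isReflectionOf_iff hβ).mp hg]
    refine ⟨fun h => ?_, D.reflection_mem hβ⟩
    simpa only [reflection_reflection] using D.reflection_mem hβ h
  | one => rfl
  | mul u v _ _ hu hv => exact hu.trans hv
  | inv u _ hu => simpa using (hu (α := u⁻¹ α)).symm

lemma coroot_eq_of_mapsTo {α : V} (hα : α ∈ D.Φ) {f : Module.Dual ℚ V} (hf : f α = 2)
    (hmaps : Set.MapsTo (Module.preReflection α f) D.Φ D.Φ) : f = D.coroot α :=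
  Module.Dual.eq_of_preReflection_mapsTo D.Φ.finite_toSet D.span_eq_top hf hmaps
    (D.coroot_self α hα) fun _ hβ => D.reflect_mem α hα _ hβ

lemma reflection_neg {α : V} (hα : α ∈ D.Φ) :
    D.reflection (-α) (D.neg_mem hα) = D.reflection α hα := by
  have h : -D.coroot (-α) = D.coroot α := by
    refine D.coroot_eq_of_mapsTo hα (by simpa using D.coroot_self _ (D.neg_mem hα)) ?_
    intro β hβ
    simpa [Module.preReflection_apply] using D.reflect_mem _ (D.neg_mem hα) β hβ
  ext x
  simp [reflection_apply, ← h]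

lemma reflection_conj {u : V ≃ₗ[ℚ] V} (hu : u ∈ WeylGroup D) {γ : V} (hγ : γ ∈ D.Φ) :
    D.reflection (u γ) ((D.apply_mem_iff hu).mpr hγ) = u * D.reflection γ hγ * u⁻¹ := by
  have hconj : ∀ x, Module.preReflection (u γ) (D.coroot γ ∘ₗ u.symm.toLinearMap) x =
      u (D.reflection γ hγ (u⁻¹ x)) := fun x => by
    simp [Module.preReflection_apply, reflection_apply]
  have h : D.coroot γ ∘ₗ u.symm.toLinearMap = D.coroot (u γ) := by
    refine D.coroot_eq_of_mapsTo ((D.apply_mem_iff hu).mpr hγ)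
      (by simpa using D.coroot_self γ hγ) fun β hβ => ?_
    rw [hconj]
    exact (D.apply_mem_iff hu).mpr (D.reflection_mem hγ
      ((D.apply_mem_iff ((WeylGroup D).inv_mem hu)).mpr hβ))
  ext x
  rw [reflection_apply, ← h, ← Module.preReflection_apply, hconj]
  rfl

instance : Finite (WeylGroup D) := by
  refine Finite.of_injective (fun w : WeylGroup D => fun α : D.Φ =>
    (⟨w.1 α, (D.apply_mem_iff w.2).mpr α.2⟩ : D.Φ)) fun w₁ w₂ h => ?_
  refine Subtype.ext (LinearEquiv.toLinearMap_injective (LinearMap.ext_on D.span_eq_top ?_))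
  intro α hα
  exact congrArg Subtype.val (congrFun h ⟨α, hα⟩)

instance : Fintype (WeylGroup D) := Fintype.ofFinite _

/-! ### A `W`-invariant inner product -/

def invariantForm : LinearMap.BilinForm ℚ V :=
  ∑ w : WeylGroup D, ∑ i, (LinearMap.mul ℚ ℚ).compl₁₂
    (D.simpleBasis.coord i ∘ₗ w.1.toLinearMap) (D.simpleBasis.coord i ∘ₗ w.1.toLinearMap)

lemma invariantForm_apply (x y : V) : D.invariantForm x y =
    ∑ w : WeylGroup D, ∑ i, D.simpleBasis.coord i (w.1 x) * D.simpleBasis.coord i (w.1 y) := by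
  simp [invariantForm]

lemma invariantForm_comm (x y : V) : D.invariantForm x y = D.invariantForm y x := by
  simp only [invariantForm_apply, mul_comm]

lemma invariantForm_self_pos {x : V} (hx : x ≠ 0) : 0 < D.invariantForm x x := by
  have hsq : ∀ y : V, 0 ≤ ∑ i, D.simpleBasis.coord i y * D.simpleBasis.coord i y :=
    fun y => Finset.sum_nonneg fun i _ => mul_self_nonneg _
  obtain ⟨i, hi⟩ := D.exists_coord_ne_zero hx
  rw [invariantForm_apply]
  refine Finset.sum_pos' (fun w _ => hsq _) ⟨1, Finset.mem_univ _, ?_⟩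
  exact Finset.sum_pos' (fun j _ => mul_self_nonneg _) ⟨i, Finset.mem_univ _, mul_self_pos.mpr hi⟩

lemma invariantForm_apply_apply {w : V ≃ₗ[ℚ] V} (hw : w ∈ WeylGroup D) (x y : V) :
    D.invariantForm (w x) (w y) = D.invariantForm x y := by
  simp only [invariantForm_apply]
  exact Equiv.sum_comp (Equiv.mulRight (⟨w, hw⟩ : WeylGroup D))
    fun u : WeylGroup D => ∑ i, D.simpleBasis.coord i (u.1 x) * D.simpleBasis.coord i (u.1 y)

lemma coroot_mul_invariantForm {α : V} (hα : α ∈ D.Φ) (x : V) :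
    D.coroot α x * D.invariantForm α α = 2 * D.invariantForm x α := by
  have h := D.invariantForm_apply_apply (D.reflection_mem_weylGroup hα) x α
  rw [reflection_apply_self, reflection_apply] at h
  simp only [map_neg, map_sub, map_smul, LinearMap.sub_apply, LinearMap.smul_apply,
    smul_eq_mul] at h
  linarith

lemma coroot_pos_iff {α : V} (hα : α ∈ D.Φ) (x : V) :
    0 < D.coroot α x ↔ 0 < D.invariantForm x α := by
  have h := D.coroot_mul_invariantForm hα x
  have hαα := D.invariantForm_self_pos (D.root_ne_zero α hα)
  constructor <;> intro _ <;> nlinarith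

lemma linearIndependent_pair {α β : V} (hα : α ∈ D.Φ) (hβ : β ∈ D.Φ) (hne : α ≠ β)
    (hne' : α ≠ -β) : LinearIndependent ℚ ![α, β] := by
  rw [LinearIndependent.pair_iff]
  intro s t hst
  by_cases ht : t = 0
  · subst ht
    simp only [zero_smul, add_zero, smul_eq_zero] at hst
    exact ⟨hst.resolve_right (D.root_ne_zero α hα), rfl⟩
  · have hβα : β = (-s / t) • α := by
      rw [← inv_smul_smul₀ ht β, eq_neg_of_add_eq_zero_right hst, div_eq_inv_mul, mul_smul,
        neg_smul]
    rcases D.reduced α hα _ (hβα ▸ hβ) with h | h <;> rw [h] at hβα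
    · exact absurd (by simpa using hβα.symm) hne
    · exact absurd (by simpa using congrArg Neg.neg hβα.symm) hne'

lemma sub_mem_of_invariantForm_pos {α β : V} (hα : α ∈ D.Φ) (hβ : β ∈ D.Φ)
    (h : 0 < D.invariantForm α β) (hne : α ≠ β) : α - β ∈ D.Φ := by
  have hαα := D.invariantForm_self_pos (D.root_ne_zero α hα)
  have hββ := D.invariantForm_self_pos (D.root_ne_zero β hβ)
  have hne' : α ≠ -β := by
    rintro rfl
    simp only [map_neg, LinearMap.neg_apply] at h
    linarith
  have hcs := (D.invariantForm.apply_mul_apply_lt_iff_linearIndependent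
    (fun _ hx => D.invariantForm_self_pos hx) α β).mpr (D.linearIndependent_pair hα hβ hne hne')
  rw [D.invariantForm_comm β α] at hcs
  obtain ⟨n, hn⟩ := D.crystallographic β hβ α hα
  obtain ⟨m, hm⟩ := D.crystallographic α hα β hβ
  have hp := D.coroot_mul_invariantForm hβ α
  have hq := D.coroot_mul_invariantForm hα β
  rw [hn] at hp
  rw [hm, D.invariantForm_comm β α] at hq
  -- strict Cauchy–Schwarz forces `n * m < 4` for the positive integers `n, m`, so one is `1`
  have hn0 : 0 < n := (Int.cast_pos (R := ℚ)).mp (by nlinarith)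
  have hm0 : 0 < m := (Int.cast_pos (R := ℚ)).mp (by nlinarith)
  have hnm : n * m < 4 := by
    have hprod : (n * m : ℚ) * (D.invariantForm α α * D.invariantForm β β) =
        (2 * D.invariantForm α β) * (2 * D.invariantForm α β) := by
      nth_rewrite 1 [← hp]; rw [← hq]; ring
    have : (n * m : ℚ) < 4 := lt_of_mul_lt_mul_right (by linarith) (mul_pos hαα hββ).le
    exact_mod_cast this
  rcases (show n = 1 ∨ m = 1 by
    by_contra! h2
    nlinarith [h2.1.lt_of_le' hn0, h2.2.lt_of_le' hm0]) with h1 | h1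
  · simpa [reflection_apply, hn, h1] using D.reflection_mem hβ hα
  · simpa [reflection_apply, hm, h1] using D.neg_mem (D.reflection_mem hα hβ)

lemma exists_mem_invariantForm_pos {m : Multiset V} {v : V} (hv : v ≠ 0) (hsum : m.sum = v) :
    ∃ γ ∈ m, 0 < D.invariantForm γ v := by
  by_contra! h
  have hle := Multiset.sum_le_card_nsmul (m.map (D.invariantForm.flip v)) 0 (fun x hx => by
    obtain ⟨γ, hγ, rfl⟩ := Multiset.mem_map.mp hx
    exact h γ hγ)
  rw [← map_multiset_sum, hsum, smul_zero] at hle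
  exact (D.invariantForm_self_pos hv).not_ge hle

lemma exists_simple_invariantForm_pos {β : V} (hβ : β ∈ D.Pos) :
    ∃ δ ∈ D.Δ, 0 < D.invariantForm β δ := by
  have hsum : ∑ i : D.Δ, D.simpleBasis.coord i β • (i : V) = β := by
    simpa [simpleBasis_apply] using D.simpleBasis.sum_repr β
  obtain ⟨γ, hγ, hpos⟩ := D.exists_mem_invariantForm_pos
    (m := Finset.univ.val.map fun i : D.Δ => D.simpleBasis.coord i β • (i : V))
    (D.root_ne_zero β (D.pos_subset hβ)) hsum
  obtain ⟨i, -, rfl⟩ := Multiset.mem_map.mp hγ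
  refine ⟨i, i.2, ?_⟩
  rw [map_smul, LinearMap.smul_apply, smul_eq_mul, D.invariantForm_comm] at hpos
  exact pos_of_mul_pos_right hpos (D.coord_nonneg hβ i)

lemma exists_simple_sub_mem_pos {β : V} (hβ : β ∈ D.Pos) (hβΔ : β ∉ D.Δ) :
    ∃ δ ∈ D.Δ, β - δ ∈ D.Pos := by
  obtain ⟨δ, hδ, h⟩ := D.exists_simple_invariantForm_pos hβ
  have hmem := D.sub_mem_of_invariantForm_pos (D.pos_subset hβ) (D.simple_mem hδ) h
    (fun h => hβΔ (h ▸ hδ))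
  refine ⟨δ, hδ, D.mem_pos_of_neg_notMem_pos hmem fun hneg => ?_⟩
  rw [neg_sub] at hneg
  exact D.add_notMem_simple hneg hβ (by rwa [sub_add_cancel])

lemma reflection_simple_mem_pos {δ α : V} (hδ : δ ∈ D.Δ) (hα : α ∈ D.Pos) (hne : α ≠ δ) :
    D.reflection δ (D.simple_mem hδ) α ∈ D.Pos := by
  obtain ⟨i, hiδ, hi⟩ : ∃ i : D.Δ, (i : V) ≠ δ ∧ 0 < D.simpleBasis.coord i α := by
    by_contra! h
    have hcoord : ∀ i : D.Δ, (i : V) ≠ δ → D.simpleBasis.coord i α = 0 :=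
      fun i hi => le_antisymm (h i hi) (D.coord_nonneg hα i)
    have hαδ : α = D.simpleBasis.coord ⟨δ, hδ⟩ α • δ := by
      conv_lhs => rw [← D.simpleBasis.sum_repr α]
      rw [Fintype.sum_eq_single ⟨δ, hδ⟩ fun i hi => by
        rw [← Module.Basis.coord_apply, hcoord i fun h => hi (Subtype.ext h), zero_smul]]
      rw [simpleBasis_apply, Module.Basis.coord_apply]
    rcases D.reduced δ (D.simple_mem hδ) _ (hαδ ▸ D.pos_subset hα) with h1 | h1 <;>
      rw [h1] at hαδ
    · exact hne (by simpa using hαδ)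
    · exact D.pos_not_neg δ (D.simple_subset hδ) (by simpa [hαδ] using hα)
  refine D.mem_pos_of_coord_pos (D.reflection_mem _ (D.pos_subset hα)) (i := i) ?_
  have hδ0 : D.simpleBasis.coord i δ = 0 :=
    (D.coord_simple i ⟨δ, hδ⟩).trans (if_neg fun h => hiδ (congrArg Subtype.val h).symm)
  rwa [reflection_apply, map_sub, map_smul, hδ0, smul_zero, sub_zero]

lemma reflection_simple_ne {δ α : V} (hδ : δ ∈ D.Δ) (hα : α ∈ D.Pos) :
    D.reflection δ (D.simple_mem hδ) α ≠ δ := by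
  intro h
  have := congrArg (D.reflection δ (D.simple_mem hδ)) h
  rw [reflection_reflection, reflection_apply_self] at this
  exact D.pos_not_neg δ (D.simple_subset hδ) (this ▸ hα)

lemma exists_mem_sum_sub_mem_pos {m : Multiset V} (hm : ∀ γ ∈ m, γ ∈ D.Pos)
    (hcard : 2 ≤ Multiset.card m) (hσ : m.sum ∈ D.Pos) : ∃ γ ∈ m, m.sum - γ ∈ D.Pos := by
  obtain ⟨γ, hγ, hpos⟩ := D.exists_mem_invariantForm_pos (D.root_ne_zero _ (D.pos_subset hσ)) rfl
  have herase : (m.erase γ).sum = m.sum - γ := eq_sub_of_add_eq' (Multiset.sum_erase hγ)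
  have hm' : ∀ x ∈ m.erase γ, x ∈ D.Pos := fun x hx => hm x (Multiset.mem_of_mem_erase hx)
  have hne : m.sum ≠ γ := by
    intro h
    refine D.multiset_sum_ne_zero hm' (fun h0 => ?_) (by rw [herase, h, sub_self])
    have := Multiset.card_erase_add_one hγ
    rw [h0, Multiset.card_zero] at this
    omega
  refine ⟨γ, hγ, herase ▸ D.multiset_sum_mem_pos hm' (herase ▸ ?_)⟩
  exact D.sub_mem_of_invariantForm_pos (D.pos_subset hσ) (D.pos_subset (hm γ hγ))
    (by rwa [D.invariantForm_comm]) hne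

/-! ### Words in the simple reflections -/

def wordProd (L : List D.Δ) : V ≃ₗ[ℚ] V :=
  (L.map fun δ : D.Δ => D.reflection δ (D.simple_mem δ.2)).prod

lemma wordProd_nil : D.wordProd [] = 1 := rfl

lemma wordProd_cons (δ : D.Δ) (L : List D.Δ) :
    D.wordProd (δ :: L) = D.reflection δ (D.simple_mem δ.2) * D.wordProd L :=
  List.prod_cons

lemma wordProd_append (L M : List D.Δ) : D.wordProd (L ++ M) = D.wordProd L * D.wordProd M := by
  simp [wordProd]

lemma wordProd_singleton (δ : D.Δ) : D.wordProd [δ] = D.reflection δ (D.simple_mem δ.2) := by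
  simp [wordProd]

lemma wordProd_reverse (L : List D.Δ) : D.wordProd L.reverse = (D.wordProd L)⁻¹ := by
  induction L with
  | nil => simp [wordProd_nil]
  | cons a L ih =>
    rw [List.reverse_cons, wordProd_append, ih, wordProd_singleton, wordProd_cons, mul_inv_rev,
      inv_eq_of_mul_eq_one_right (D.reflection_mul_self _)]

lemma wordProd_mem_weylGroup (L : List D.Δ) : D.wordProd L ∈ WeylGroup D :=
  (WeylGroup D).list_prod_mem fun _ h => by
    obtain ⟨δ, -, rfl⟩ := List.mem_map.mp h
    exact D.reflection_mem_weylGroup _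

lemma exists_wordProd_apply_simple {β : V} (hβ : β ∈ D.Pos) :
    ∃ (L : List D.Δ) (δ : D.Δ), D.wordProd L δ = β := by
  induction h : rootHt D β using Nat.strong_induction_on generalizing β with
  | _ n ih =>
  by_cases hβΔ : β ∈ D.Δ
  · exact ⟨[], ⟨β, hβΔ⟩, rfl⟩
  obtain ⟨δ, hδ, hpos⟩ := D.exists_simple_invariantForm_pos hβ
  set s := D.reflection δ (D.simple_mem hδ)
  have hsβ : s β ∈ D.Pos := D.reflection_simple_mem_pos hδ hβ fun h => hβΔ (h ▸ hδ)
  have hlt : rootHt D (s β) < n := by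
    rw [← h, D.rootHt_lt_rootHt_iff hsβ hβ, reflection_apply, map_sub, map_smul,
      D.height_simple ⟨δ, hδ⟩, smul_eq_mul, mul_one, sub_lt_self_iff]
    exact (D.coroot_pos_iff (D.simple_mem hδ) β).mpr hpos
  obtain ⟨L, ε, hL⟩ := ih _ hlt hsβ rfl
  exact ⟨⟨δ, hδ⟩ :: L, ε, by rw [wordProd_cons, LinearEquiv.mul_apply, hL, reflection_reflection]⟩

lemma exists_wordProd_eq_reflection {α : V} (hα : α ∈ D.Φ) :
    ∃ L : List D.Δ, D.wordProd L = D.reflection α hα := by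
  suffices h : ∀ β (hβ : β ∈ D.Pos), ∃ L, D.wordProd L = D.reflection β (D.pos_subset hβ) by
    rcases D.pos_or_neg α hα with hα' | hα'
    · exact h α hα'
    · obtain ⟨L, hL⟩ := h _ hα'
      exact ⟨L, hL.trans (D.reflection_neg hα)⟩
  intro β hβ
  obtain ⟨L, δ, rfl⟩ := D.exists_wordProd_apply_simple hβ
  refine ⟨L ++ [δ] ++ L.reverse, ?_⟩
  rw [D.reflection_conj (D.wordProd_mem_weylGroup L), wordProd_append, wordProd_append,
    wordProd_singleton, wordProd_reverse]

lemma exists_wordProd_eq {w : V ≃ₗ[ℚ] V} (hw : w ∈ WeylGroup D) :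
    ∃ L : List D.Δ, D.wordProd L = w := by
  induction hw using Subgroup.closure_induction with
  | mem g hg =>
    obtain ⟨α, hα, hg⟩ := hg
    rw [(D.isReflectionOf_iff hα).mp hg]
    exact D.exists_wordProd_eq_reflection hα
  | one => exact ⟨[], rfl⟩
  | mul u v _ _ hu hv =>
    obtain ⟨L, rfl⟩ := hu
    obtain ⟨M, rfl⟩ := hv
    exact ⟨L ++ M, D.wordProd_append L M⟩
  | inv u _ hu =>
    obtain ⟨L, rfl⟩ := hu
    exact ⟨L.reverse, D.wordProd_reverse L⟩

lemma exists_wordProd_eq_mul_reflection (L : List D.Δ) {δ : V} (hδ : δ ∈ D.Δ)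
    (h : -(D.wordProd L δ) ∈ D.Pos) : ∃ M : List D.Δ, M.length < L.length ∧
      D.wordProd M = D.wordProd L * D.reflection δ (D.simple_mem hδ) := by
  induction L with
  | nil => exact absurd h (D.pos_not_neg δ (D.simple_subset hδ))
  | cons a L ih =>
    by_cases hL : -(D.wordProd L δ) ∈ D.Pos
    · obtain ⟨M, hlen, hM⟩ := ih hL
      exact ⟨a :: M, by simpa using hlen, by rw [wordProd_cons, wordProd_cons, hM, mul_assoc]⟩
    have hLδ : D.wordProd L δ ∈ D.Pos := D.mem_pos_of_neg_notMem_pos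
      ((D.apply_mem_iff (D.wordProd_mem_weylGroup L)).mpr (D.simple_mem hδ)) hL
    -- `a` is the only positive root that `s_a` makes negative
    have ha : D.wordProd L δ = a := by
      by_contra hne
      rw [wordProd_cons, LinearEquiv.mul_apply] at h
      exact D.pos_not_neg _ (D.reflection_simple_mem_pos a.2 hLδ hne) h
    have hconj := D.reflection_conj (D.wordProd_mem_weylGroup L) (D.simple_mem hδ)
    simp only [ha] at hconj
    refine ⟨L, by simp, ?_⟩
    rw [wordProd_cons, hconj]
    simp only [mul_assoc, inv_mul_cancel_left, D.reflection_mul_self, mul_one]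

lemma eq_one_of_mapsTo_pos {w : V ≃ₗ[ℚ] V} (hw : w ∈ WeylGroup D)
    (h : ∀ α ∈ D.Pos, w α ∈ D.Pos) : w = 1 := by
  obtain ⟨L, rfl⟩ := D.exists_wordProd_eq hw
  clear hw
  induction hn : L.length using Nat.strong_induction_on generalizing L with
  | _ n ih =>
  rcases L.eq_nil_or_concat' with rfl | ⟨T, a, rfl⟩
  · rfl
  have hT : D.wordProd (T ++ [a]) = D.wordProd T * D.reflection a (D.simple_mem a.2) := by
    rw [wordProd_append, wordProd_singleton]
  have hneg : -(D.wordProd T a) ∈ D.Pos := by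
    simpa [hT, reflection_apply_self] using h a (D.simple_subset a.2)
  obtain ⟨M, hlen, hM⟩ := D.exists_wordProd_eq_mul_reflection T a.2 hneg
  rw [← hT] at hM
  rw [← hM] at h ⊢
  exact ih M.length (by simp at hn; omega) M h rfl

/-! ### Inversion sets and biconvex sets -/

lemma mem_negSet {w : V ≃ₗ[ℚ] V} {α : V} : α ∈ negSet D w ↔ α ∈ D.Pos ∧ -(w α) ∈ D.Pos :=
  Finset.mem_filter

lemma negSet_subset_pos (w : V ≃ₗ[ℚ] V) : negSet D w ⊆ D.Pos := Finset.filter_subset _ _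

lemma apply_mem_pos_of_notMem_negSet {w : V ≃ₗ[ℚ] V} (hw : w ∈ WeylGroup D) {α : V}
    (hα : α ∈ D.Pos) (h : α ∉ negSet D w) : w α ∈ D.Pos :=
  D.mem_pos_of_neg_notMem_pos ((D.apply_mem_iff hw).mpr (D.pos_subset hα))
    fun h' => h (D.mem_negSet.mpr ⟨hα, h'⟩)

lemma negSet_one : negSet D 1 = ∅ :=
  Finset.eq_empty_of_forall_notMem fun α hα =>
    D.pos_not_neg α (D.mem_negSet.mp hα).1 (D.mem_negSet.mp hα).2

lemma eq_of_negSet_eq {w₁ w₂ : V ≃ₗ[ℚ] V} (h₁ : w₁ ∈ WeylGroup D) (h₂ : w₂ ∈ WeylGroup D)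
    (h : negSet D w₁ = negSet D w₂) : w₁ = w₂ := by
  suffices w₁ * w₂⁻¹ = 1 from mul_inv_eq_one.mp this
  refine D.eq_one_of_mapsTo_pos ((WeylGroup D).mul_mem h₁ ((WeylGroup D).inv_mem h₂))
    fun β hβ => ?_
  have hγ : w₂⁻¹ β ∈ D.Φ := (D.apply_mem_iff ((WeylGroup D).inv_mem h₂)).mpr (D.pos_subset hβ)
  have hw₂γ : w₂ (w₂⁻¹ β) = β := w₂.apply_symm_apply β
  rw [LinearEquiv.mul_apply]
  rcases D.pos_or_neg _ hγ with hγ' | hγ'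
  · refine D.apply_mem_pos_of_notMem_negSet h₁ hγ' ?_
    rw [h, mem_negSet, hw₂γ]
    exact fun h' => D.pos_not_neg β hβ h'.2
  · have hmem : -(w₂⁻¹ β) ∈ negSet D w₂ := D.mem_negSet.mpr ⟨hγ', by simpa [hw₂γ] using hβ⟩
    rw [← h] at hmem
    simpa using (D.mem_negSet.mp hmem).2

lemma mem_negSet_mul_reflection_iff {w : V ≃ₗ[ℚ] V} {δ α : V} (hδ : δ ∈ D.Δ) (hα : α ∈ D.Pos)
    (hne : α ≠ δ) : α ∈ negSet D (w * D.reflection δ (D.simple_mem hδ)) ↔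
      D.reflection δ (D.simple_mem hδ) α ∈ negSet D w := by
  simp only [mem_negSet, LinearEquiv.mul_apply, hα, D.reflection_simple_mem_pos hδ hα hne,
    true_and]

lemma simple_mem_negSet_mul_reflection_iff {w : V ≃ₗ[ℚ] V} (hw : w ∈ WeylGroup D) {δ : V}
    (hδ : δ ∈ D.Δ) : δ ∈ negSet D (w * D.reflection δ (D.simple_mem hδ)) ↔ δ ∉ negSet D w := by
  have hδ' := D.simple_subset hδ
  simp only [mem_negSet, LinearEquiv.mul_apply, reflection_apply_self, map_neg, neg_neg, hδ',
    true_and]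
  exact ⟨fun h h' => D.pos_not_neg _ h h', fun h => D.mem_pos_of_neg_notMem_pos
    ((D.apply_mem_iff hw).mpr (D.simple_mem hδ)) h⟩

lemma forall_symm_simple_mem_iff {I : Finset V} {w : V ≃ₗ[ℚ] V} (hw : w ∈ WeylGroup D) :
    (∀ δ ∈ D.Δ, w.symm δ ∈ (I.image fun α => -α) ∪ D.Pos) ↔
      ∀ γ ∈ negSet D w, -(w γ) ∈ D.Δ → γ ∈ I := by
  refine ⟨fun h γ hγ hδ => ?_, fun h δ hδ => ?_⟩
  · have := h _ hδ
    rw [map_neg, LinearEquiv.symm_apply_apply, Finset.mem_union, Finset.mem_image] at this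
    rcases this with ⟨α, hα, hαγ⟩ | hneg
    · rwa [neg_injective hαγ] at hα
    · exact absurd hneg (D.pos_not_neg γ (D.mem_negSet.mp hγ).1)
  have hδ' : w.symm δ ∈ D.Φ :=
    (D.apply_mem_iff ((WeylGroup D).inv_mem hw)).mpr (D.simple_mem hδ)
  rcases D.pos_or_neg _ hδ' with hpos | hneg
  · exact Finset.mem_union_right _ hpos
  have hw' : -(w (-(w.symm δ))) = δ := by simp
  refine Finset.mem_union_left _ (Finset.mem_image.mpr ⟨_, h _ ?_ (by rwa [hw']), neg_neg _⟩)
  exact D.mem_negSet.mpr ⟨hneg, by rw [hw']; exact D.simple_subset hδ⟩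

lemma multiset_sum_ne_of_mem_negSet {w : V ≃ₗ[ℚ] V} (hw : w ∈ WeylGroup D)
    {m₁ m₂ : Multiset V} (h₁ : ∀ x ∈ m₁, x ∈ negSet D w)
    (h₂ : ∀ x ∈ m₂, x ∈ D.Pos ∧ x ∉ negSet D w) (hne : m₂ ≠ 0) : m₁.sum ≠ m₂.sum := by
  intro h
  have hpos : ∀ x ∈ m₂.map w + m₁.map fun x => -(w x), x ∈ D.Pos := by
    intro x hx
    rcases Multiset.mem_add.mp hx with hx | hx <;> obtain ⟨y, hy, rfl⟩ := Multiset.mem_map.mp hx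
    · exact D.apply_mem_pos_of_notMem_negSet hw (h₂ y hy).1 (h₂ y hy).2
    · exact (D.mem_negSet.mp (h₁ y hy)).2
  refine D.multiset_sum_ne_zero hpos (by simp [hne]) ?_
  rw [Multiset.sum_add, Multiset.sum_map_neg, ← map_multiset_sum, ← map_multiset_sum, h,
    add_neg_cancel]

lemma mem_image_reflection_iff {C : Finset V} {δ x : V} (hδ : δ ∈ D.Δ) (hx : x ∈ D.Pos) :
    x ∈ (C.erase δ).image (D.reflection δ (D.simple_mem hδ)) ↔
      D.reflection δ (D.simple_mem hδ) x ∈ C := by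
  rw [Finset.mem_image]
  refine ⟨fun ⟨c, hc, hcx⟩ => ?_, fun h => ⟨_, Finset.mem_erase.mpr
    ⟨D.reflection_simple_ne hδ hx, h⟩, D.reflection_reflection _ x⟩⟩
  rw [← hcx, D.reflection_reflection]
  exact Finset.mem_of_mem_erase hc

structure IsBiconvex (C : Finset V) : Prop where
  subset_pos : C ⊆ D.Pos
  add_mem : ∀ α ∈ C, ∀ β ∈ C, α + β ∈ D.Φ → α + β ∈ C
  add_notMem : ∀ α ∈ D.Pos, ∀ β ∈ D.Pos, α ∉ C → β ∉ C → α + β ∈ D.Pos → α + β ∉ C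

lemma isBiconvex_negSet {w : V ≃ₗ[ℚ] V} (hw : w ∈ WeylGroup D) : D.IsBiconvex (negSet D w) where
  subset_pos := D.negSet_subset_pos w
  add_mem α hα β hβ hαβ := by
    have hαβ' := D.add_mem_pos (D.mem_negSet.mp hα).1 (D.mem_negSet.mp hβ).1 hαβ
    refine D.mem_negSet.mpr ⟨hαβ', ?_⟩
    rw [map_add, neg_add]
    refine D.add_mem_pos (D.mem_negSet.mp hα).2 (D.mem_negSet.mp hβ).2 ?_
    rw [← neg_add, ← map_add]
    exact D.neg_mem ((D.apply_mem_iff hw).mpr hαβ)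
  add_notMem α hα β hβ hαC hβC hαβ h := by
    have hsum := D.add_mem_pos (D.apply_mem_pos_of_notMem_negSet hw hα hαC)
      (D.apply_mem_pos_of_notMem_negSet hw hβ hβC)
      (by rw [← map_add]; exact (D.apply_mem_iff hw).mpr (D.pos_subset hαβ))
    rw [← map_add] at hsum
    exact D.pos_not_neg _ hsum (D.mem_negSet.mp h).2

variable {D}

lemma IsBiconvex.isWeylType_inter {C I : Finset V} (hC : D.IsBiconvex C) (hI : I ⊆ D.Pos) :
    IsWeylType I (C ∩ I) := by
  refine ⟨Finset.inter_subset_right, fun α hα β hβ hαβ => ?_, fun γ hγ δ hδ hγC hδC hγδ => ?_⟩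
  · rw [Finset.mem_inter] at hα hβ ⊢
    exact ⟨hC.add_mem α hα.1 β hβ.1 (D.pos_subset (hI hαβ)), hαβ⟩
  · simp only [Finset.mem_inter, hγ, hδ, hγδ, and_true] at hγC hδC ⊢
    exact hC.add_notMem γ (hI hγ) δ (hI hδ) hγC hδC (hI hγδ)

lemma IsBiconvex.sub_mem {C : Finset V} (hC : D.IsBiconvex C) {α β : V} (hα : α ∈ C)
    (hβ : β ∈ D.Pos) (hβC : β ∉ C) (h : α - β ∈ D.Pos) : α - β ∈ C :=
  by_contra fun h' => hC.add_notMem _ h β hβ h' hβC (by simpa using hC.subset_pos hα)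
    (by simpa using hα)

lemma IsBiconvex.sub_notMem {C : Finset V} (hC : D.IsBiconvex C) {α β : V} (hα : α ∈ D.Pos)
    (hαC : α ∉ C) (hβ : β ∈ C) : α - β ∉ C :=
  fun h' => hαC (by simpa using hC.add_mem _ h' _ hβ (by simpa using D.pos_subset hα))

lemma IsBiconvex.exists_simple_mem {C : Finset V} (hC : D.IsBiconvex C) (hne : C.Nonempty) :
    ∃ δ ∈ C, δ ∈ D.Δ := by
  obtain ⟨δ, hδC, hmin⟩ := Finset.exists_min_image C (rootHt D) hne
  refine ⟨δ, hδC, by_contra fun hδΔ => ?_⟩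
  have hδ := hC.subset_pos hδC
  obtain ⟨ε, hε, hsub⟩ := D.exists_simple_sub_mem_pos hδ hδΔ
  have hεP := D.simple_subset hε
  by_cases hsubC : δ - ε ∈ C
  · exact (hmin _ hsubC).not_gt (D.rootHt_lt_of_add_eq hsub hεP hδ (sub_add_cancel δ ε))
  by_cases hεC : ε ∈ C
  · exact (hmin _ hεC).not_gt (D.rootHt_lt_of_add_eq hεP hsub hδ (add_sub_cancel ε δ))
  exact hC.add_notMem _ hsub ε hεP hsubC hεC (by rwa [sub_add_cancel]) (by rwa [sub_add_cancel])

lemma IsBiconvex.image_reflection {C : Finset V} (hC : D.IsBiconvex C) {δ : V} (hδ : δ ∈ D.Δ)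
    (hδC : δ ∈ C) :
    D.IsBiconvex ((C.erase δ).image (D.reflection δ (D.simple_mem hδ))) := by
  set s := D.reflection δ (D.simple_mem hδ)
  have hsub : (C.erase δ).image s ⊆ D.Pos := by
    intro x hx
    obtain ⟨c, hc, rfl⟩ := Finset.mem_image.mp hx
    exact D.reflection_simple_mem_pos hδ (hC.subset_pos (Finset.mem_of_mem_erase hc))
      (Finset.ne_of_mem_erase hc)
  have hmem : ∀ x ∈ D.Pos, x ∈ (C.erase δ).image s ↔ s x ∈ C :=
    fun x hx => D.mem_image_reflection_iff hδ hx
  refine ⟨hsub, fun α hα β hβ hαβ => ?_, fun α hα β hβ hαC hβC hαβ h => ?_⟩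
  · have hαβ' := D.add_mem_pos (hsub hα) (hsub hβ) hαβ
    rw [hmem _ hαβ', map_add]
    rw [hmem _ (hsub hα)] at hα
    rw [hmem _ (hsub hβ)] at hβ
    exact hC.add_mem _ hα _ hβ (map_add s α β ▸ D.reflection_mem _ hαβ)
  rw [hmem _ hα] at hαC
  rw [hmem _ hβ] at hβC
  rw [hmem _ hαβ] at h
  -- if one summand is `δ`, closedness of `C` puts the image of the other summand into `C`
  have key : ∀ q ∈ D.Pos, s q ∉ C → s (δ + q) ∉ C := fun q hq hqC hδq => by
    refine hqC ?_
    have : s q = s (δ + q) + δ := by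
      rw [map_add, reflection_apply_self]; abel
    rw [this]
    exact hC.add_mem _ hδq _ hδC (this ▸ D.reflection_mem _ (D.pos_subset hq))
  by_cases hαδ : α = δ
  · exact key β hβ hβC (hαδ ▸ h)
  by_cases hβδ : β = δ
  · exact key α hα hαC (hβδ ▸ add_comm α β ▸ h)
  have hsum := D.reflection_simple_mem_pos hδ hαβ fun h' => D.add_notMem_simple hα hβ (h' ▸ hδ)
  rw [map_add] at hsum h
  exact hC.add_notMem _ (D.reflection_simple_mem_pos hδ hα hαδ) _
    (D.reflection_simple_mem_pos hδ hβ hβδ) hαC hβC hsum h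

lemma IsBiconvex.exists_negSet_eq {C : Finset V} (hC : D.IsBiconvex C) :
    ∃ w ∈ WeylGroup D, negSet D w = C := by
  induction hn : C.card using Nat.strong_induction_on generalizing C with
  | _ n ih =>
  rcases C.eq_empty_or_nonempty with rfl | hne
  · exact ⟨1, (WeylGroup D).one_mem, D.negSet_one⟩
  obtain ⟨δ, hδC, hδ⟩ := hC.exists_simple_mem hne
  set s := D.reflection δ (D.simple_mem hδ)
  have hcard : ((C.erase δ).image s).card < n := by
    rw [Finset.card_image_of_injective _ s.injective, Finset.card_erase_of_mem hδC, ← hn]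
    exact Nat.sub_lt (Finset.card_pos.mpr hne) one_pos
  obtain ⟨w, hw, hwC⟩ := ih _ hcard (hC.image_reflection hδ hδC) rfl
  refine ⟨w * s, (WeylGroup D).mul_mem hw (D.reflection_mem_weylGroup _), ?_⟩
  ext α
  by_cases hα : α ∈ D.Pos
  swap
  · exact iff_of_false (fun h => hα (D.negSet_subset_pos _ h)) fun h => hα (hC.subset_pos h)
  by_cases hαδ : α = δ
  · subst hαδ
    rw [D.simple_mem_negSet_mul_reflection_iff hw hδ, hwC, D.mem_image_reflection_iff hδ hα,
      reflection_apply_self]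
    exact iff_of_true (fun h => D.pos_not_neg α hα (hC.subset_pos h)) hδC
  · rw [D.mem_negSet_mul_reflection_iff hδ hα hαδ, hwC,
      D.mem_image_reflection_iff hδ (D.reflection_simple_mem_pos hδ hα hαδ), reflection_reflection]

/-! ### Sum closures -/

variable (D) in
def sumClosure (Y : Finset V) : Finset V :=
  D.Pos.filter fun σ => ∃ m : Multiset V, m ≠ 0 ∧ (∀ y ∈ m, y ∈ Y) ∧ m.sum = σ

lemma mem_sumClosure {Y : Finset V} {σ : V} : σ ∈ D.sumClosure Y ↔
    σ ∈ D.Pos ∧ ∃ m : Multiset V, m ≠ 0 ∧ (∀ y ∈ m, y ∈ Y) ∧ m.sum = σ :=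
  Finset.mem_filter

lemma sumClosure_subset_pos (Y : Finset V) : D.sumClosure Y ⊆ D.Pos := Finset.filter_subset _ _

lemma subset_sumClosure {Y : Finset V} (hY : Y ⊆ D.Pos) : Y ⊆ D.sumClosure Y := fun y hy =>
  mem_sumClosure.mpr ⟨hY hy, {y}, by simp, by simpa using hy, by simp⟩

lemma add_mem_sumClosure {Y : Finset V} {σ₁ σ₂ : V} (h₁ : σ₁ ∈ D.sumClosure Y)
    (h₂ : σ₂ ∈ D.sumClosure Y) (h : σ₁ + σ₂ ∈ D.Φ) : σ₁ + σ₂ ∈ D.sumClosure Y := by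
  obtain ⟨hσ₁, m₁, hm₁, hY₁, rfl⟩ := mem_sumClosure.mp h₁
  obtain ⟨hσ₂, m₂, -, hY₂, rfl⟩ := mem_sumClosure.mp h₂
  refine mem_sumClosure.mpr ⟨D.add_mem_pos hσ₁ hσ₂ h, m₁ + m₂, by simp [hm₁], fun y hy => ?_,
    Multiset.sum_add _ _⟩
  rcases Multiset.mem_add.mp hy with hy | hy
  · exact hY₁ y hy
  · exact hY₂ y hy

lemma sumClosure_induction {Y : Finset V} (hY : Y ⊆ D.Pos) {P : V → Prop}
    (base : ∀ y ∈ Y, P y)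
    (step : ∀ σ ∈ D.sumClosure Y, ∀ y ∈ Y, σ + y ∈ D.Pos → P σ → P (σ + y)) :
    ∀ σ ∈ D.sumClosure Y, P σ := by
  suffices h : ∀ m : Multiset V, m ≠ 0 → (∀ y ∈ m, y ∈ Y) → m.sum ∈ D.Pos → P m.sum by
    intro σ hσ
    obtain ⟨hσP, m, hm, hmY, rfl⟩ := mem_sumClosure.mp hσ
    exact h m hm hmY hσP
  intro m
  induction m using Multiset.strongInductionOn with
  | ih m ih =>
  intro hm hmY hσ
  by_cases hcard : Multiset.card m = 1
  · obtain ⟨y, rfl⟩ := Multiset.card_eq_one.mp hcard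
    simpa using base y (hmY y (Multiset.mem_singleton_self y))
  have hcard2 : 2 ≤ Multiset.card m := by
    have := Multiset.card_pos.mpr hm
    omega
  obtain ⟨y, hy, hsub⟩ := D.exists_mem_sum_sub_mem_pos (fun γ hγ => hY (hmY γ hγ)) hcard2 hσ
  have herase : (m.erase y).sum = m.sum - y := eq_sub_of_add_eq' (Multiset.sum_erase hy)
  have hne : m.erase y ≠ 0 := fun h0 => hcard (by
    have := Multiset.card_erase_add_one hy
    rwa [h0, Multiset.card_zero, zero_add, eq_comm] at this)
  have hmY' : ∀ x ∈ m.erase y, x ∈ Y := fun x hx => hmY x (Multiset.mem_of_mem_erase hx)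
  have hP := ih _ (Multiset.erase_lt.mpr hy) hne hmY' (herase ▸ hsub)
  rw [herase] at hP
  simpa using step _ (mem_sumClosure.mpr ⟨hsub, _, hne, hmY', herase⟩) y (hmY y hy)
    (by simpa using hσ) hP

lemma IsBiconvex.sumClosure_subset {C Y : Finset V} (hC : D.IsBiconvex C) (hYC : Y ⊆ C) :
    D.sumClosure Y ⊆ C := fun σ hσ =>
  sumClosure_induction (hYC.trans hC.subset_pos) hYC
    (fun σ _ y hy hσy hσC => hC.add_mem σ hσC y (hYC hy) (D.pos_subset hσy)) σ hσ

lemma _root_.IsWeylType.sumClosure_inter {I Y : Finset V} (hI : IsLowerIdealOf D.Pos I)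
    (hY : IsWeylType I Y) : D.sumClosure Y ∩ I = Y := by
  have hYP : Y ⊆ D.Pos := hY.1.trans hI.1
  refine subset_antisymm (fun σ hσ => ?_) (Finset.subset_inter (subset_sumClosure hYP) hY.1)
  refine sumClosure_induction hYP (P := fun x => x ∈ I → x ∈ Y) (fun y hy _ => hy)
    (fun τ hτ y hy _ ih hτyI => ?_) σ (Finset.mem_inter.mp hσ).1 (Finset.mem_inter.mp hσ).2
  exact hY.2.1 τ (ih (hI.mem_of_add_mem (sumClosure_subset_pos Y hτ) (hYP hy) hτyI)) y hy hτyI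

lemma _root_.IsWeylType.mem_sumClosure_or_mem_of_add_eq {I Y : Finset V}
    (hI : IsLowerIdealOf D.Pos I) (hY : IsWeylType I Y) {σ y a b : V} (hσ : σ ∈ D.sumClosure Y)
    (hy : y ∈ Y)
    (hsplit : ∀ α ∈ D.Pos, ∀ β ∈ D.Pos, α + β = σ → α ∈ D.sumClosure Y ∨ β ∈ D.sumClosure Y)
    (ha : a ∈ D.Pos) (hb : b ∈ D.Pos) (hab : a + b = σ + y)
    (h : 0 < D.invariantForm a σ ∨ 0 < D.invariantForm a y) :
    a ∈ D.sumClosure Y ∨ b ∈ D.sumClosure Y := by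
  have hYP : Y ⊆ D.Pos := hY.1.trans hI.1
  have hyC := subset_sumClosure hYP hy
  rcases h with h | h
  · by_cases haσ : a = σ
    · exact Or.inl (haσ ▸ hσ)
    have hsub := D.sub_mem_of_invariantForm_pos (D.pos_subset ha)
      (D.pos_subset (sumClosure_subset_pos Y hσ)) h haσ
    rcases D.pos_or_neg _ hsub with hsub | hsub
    · have hy' : (a - σ) + b = y := by rw [sub_add_eq_add_sub, hab]; abel
      rcases hY.mem_or_mem_of_add_mem hI hsub hb (hy' ▸ hy) with h' | h'
      · left
        simpa using add_mem_sumClosure hσ (subset_sumClosure hYP h')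
          (by simpa using D.pos_subset ha)
      · exact Or.inr (subset_sumClosure hYP h')
    · rw [neg_sub] at hsub
      refine (hsplit a ha _ hsub (by abel)).imp_right fun h' => ?_
      have hb' : b = (σ - a) + y := by rw [sub_add_eq_add_sub, ← hab]; abel
      rw [hb'] at hb ⊢
      exact add_mem_sumClosure h' hyC (D.pos_subset hb)
  · by_cases hay : a = y
    · exact Or.inl (hay ▸ hyC)
    have hsub := D.sub_mem_of_invariantForm_pos (D.pos_subset ha) (D.pos_subset (hYP hy)) h hay
    rcases D.pos_or_neg _ hsub with hsub | hsub
    · have hσ' : (a - y) + b = σ := by rw [sub_add_eq_add_sub, hab]; abel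
      refine (hsplit _ hsub b hb hσ').imp_left fun h' => ?_
      simpa using add_mem_sumClosure h' hyC (by simpa using D.pos_subset ha)
    · rw [neg_sub] at hsub
      rcases hY.mem_or_mem_of_add_mem hI ha hsub (by rwa [add_sub_cancel]) with h' | h'
      · exact Or.inl (subset_sumClosure hYP h')
      · right
        have hb' : b = σ + (y - a) := by rw [← add_sub_assoc, ← hab]; abel
        rw [hb'] at hb ⊢
        exact add_mem_sumClosure hσ (subset_sumClosure hYP h') (D.pos_subset hb)

lemma _root_.IsWeylType.isBiconvex_sumClosure {I Y : Finset V} (hI : IsLowerIdealOf D.Pos I)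
    (hY : IsWeylType I Y) : D.IsBiconvex (D.sumClosure Y) where
  subset_pos := sumClosure_subset_pos Y
  add_mem _ h₁ _ h₂ h := add_mem_sumClosure h₁ h₂ h
  add_notMem α hα β hβ hαC hβC _ hαβ := by
    have hYP : Y ⊆ D.Pos := hY.1.trans hI.1
    suffices h : ∀ σ ∈ D.sumClosure Y, ∀ α ∈ D.Pos, ∀ β ∈ D.Pos, α + β = σ →
        α ∈ D.sumClosure Y ∨ β ∈ D.sumClosure Y from (h _ hαβ α hα β hβ rfl).elim hαC hβC
    refine sumClosure_induction hYP (fun y hy α hα β hβ hαβ => ?_)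
      (fun σ hσ y hy hσy ih α hα β hβ hαβ => ?_)
    · exact (hY.mem_or_mem_of_add_mem hI hα hβ (hαβ ▸ hy)).imp
        (subset_sumClosure hYP ·) (subset_sumClosure hYP ·)
    -- `0 < (α + β, σ + y)`, so `α` or `β` is at an acute angle with `σ` or with `y`
    by_cases hα' : 0 < D.invariantForm α σ ∨ 0 < D.invariantForm α y
    · exact hY.mem_sumClosure_or_mem_of_add_eq hI hσ hy ih hα hβ hαβ hα'
    by_cases hβ' : 0 < D.invariantForm β σ ∨ 0 < D.invariantForm β y
    · exact (hY.mem_sumClosure_or_mem_of_add_eq hI hσ hy ih hβ hα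
        (by rw [add_comm, hαβ]) hβ').symm
    push Not at hα' hβ'
    have hpos := D.invariantForm_self_pos (D.root_ne_zero _ (D.pos_subset hσy))
    nth_rewrite 1 [← hαβ] at hpos
    simp only [map_add, LinearMap.add_apply] at hpos
    linarith

lemma mem_sumClosure_of_add_eq_sum {I : Finset V} (hI : IsLowerIdealOf D.Pos I)
    {w : V ≃ₗ[ℚ] V} (hw : w ∈ WeylGroup D) {m : Multiset V} (hm : ∀ y ∈ m, y ∈ negSet D w ∩ I)
    {α c : V} (hα : α ∈ negSet D w) (hc : c ∈ D.Pos) (hcN : c ∉ negSet D w)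
    (hsum : α + c = m.sum) : α ∈ D.sumClosure (negSet D w ∩ I) := by
  induction m using Multiset.strongInductionOn generalizing α c with
  | ih m ih =>
  have hN := D.isBiconvex_negSet hw
  have hYP : negSet D w ∩ I ⊆ D.Pos := Finset.inter_subset_left.trans hN.subset_pos
  have hαP := hN.subset_pos hα
  -- some `y ∈ m` is at an acute angle with `α + c`, hence with `c` or with `α`
  obtain ⟨y, hy, hpos⟩ := D.exists_mem_invariantForm_pos
    (fun h => D.pos_not_neg α hαP (by rwa [← eq_neg_of_add_eq_zero_right h])) hsum.symm
  obtain ⟨hyN, hyI⟩ := Finset.mem_inter.mp (hm y hy)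
  have hm' : ∀ x ∈ m.erase y, x ∈ negSet D w ∩ I := fun x hx => hm x (Multiset.mem_of_mem_erase hx)
  have herase : (m.erase y).sum = α + c - y := by
    rw [hsum]; exact eq_sub_of_add_eq' (Multiset.sum_erase hy)
  have hlt := Multiset.erase_lt.mpr hy
  rw [map_add, D.invariantForm_comm y α, D.invariantForm_comm y c] at hpos
  by_cases hcy : 0 < D.invariantForm c y
  · rcases D.pos_or_neg _ (D.sub_mem_of_invariantForm_pos (D.pos_subset (hYP (hm y hy)))
      (D.pos_subset hc) (by rwa [D.invariantForm_comm]) fun h => hcN (h ▸ hyN)) with hsub | hsub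
    · refine mem_sumClosure.mpr ⟨hαP, (y - c) ::ₘ m.erase y, Multiset.cons_ne_zero,
        fun x hx => ?_, by rw [Multiset.sum_cons, herase]; abel⟩
      rcases Multiset.mem_cons.mp hx with rfl | hx
      exacts [Finset.mem_inter.mpr ⟨hN.sub_mem hyN hc hcN hsub, hI.2 y hyI c hc hsub⟩, hm' x hx]
    · rw [neg_sub] at hsub
      exact ih _ hlt hm' hα hsub (hN.sub_notMem hc hcN hyN) (by rw [herase]; abel)
  by_cases hαy : α = y
  · exact subset_sumClosure hYP (hαy ▸ hm y hy)
  rcases D.pos_or_neg _ (D.sub_mem_of_invariantForm_pos (D.pos_subset hαP)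
    (D.pos_subset (hYP (hm y hy))) (by linarith) hαy) with hsub | hsub
  · by_cases hsubN : α - y ∈ negSet D w
    · simpa using add_mem_sumClosure (ih _ hlt hm' hsubN hc hcN (by rw [herase]; abel))
        (subset_sumClosure hYP (hm y hy)) (by simpa using D.pos_subset hαP)
    · refine absurd (by rw [herase]; simp; abel) (D.multiset_sum_ne_of_mem_negSet hw
        (m₁ := m.erase y) (m₂ := {α - y, c}) (fun x hx => (Finset.mem_inter.mp (hm' x hx)).1)
        ?_ (by simp))
      simp only [Multiset.insert_eq_cons, Multiset.mem_cons, Multiset.mem_singleton,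
        forall_eq_or_imp, forall_eq]
      exact ⟨⟨hsub, hsubN⟩, hc, hcN⟩
  · rw [neg_sub] at hsub
    exact subset_sumClosure hYP (Finset.mem_inter.mpr
      ⟨hα, by simpa using hI.2 y hyI (y - α) hsub (by simpa using hαP)⟩)

lemma negSet_subset_sumClosure {I : Finset V} (hI : IsLowerIdealOf D.Pos I) {w : V ≃ₗ[ℚ] V}
    (hw : w ∈ WeylGroup D) (hbd : ∀ γ ∈ negSet D w, -(w γ) ∈ D.Δ → γ ∈ I) :
    negSet D w ⊆ D.sumClosure (negSet D w ∩ I) := by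
  intro α hα
  induction h : rootHt D (-(w α)) using Nat.strong_induction_on generalizing α with
  | _ n ih =>
  have hYP : negSet D w ∩ I ⊆ D.Pos := Finset.inter_subset_left.trans (D.negSet_subset_pos w)
  obtain ⟨hαP, hη⟩ := D.mem_negSet.mp hα
  by_cases hηΔ : -(w α) ∈ D.Δ
  · exact subset_sumClosure hYP (Finset.mem_inter.mpr ⟨hα, hbd α hα hηΔ⟩)
  obtain ⟨ε, hε, hη'⟩ := D.exists_simple_sub_mem_pos hη hηΔ
  have hεP := D.simple_subset hε
  -- split `α = p + q` according to `-w α = (-w α - ε) + ε`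
  set p := -(w.symm (-(w α) - ε))
  set q := -(w.symm ε)
  have hαpq : α = p + q := by simp [p, q]
  have hwp : -(w p) = -(w α) - ε := by simp [p, sub_eq_add_neg]
  have hwq : -(w q) = ε := by simp [q]
  have hW := (WeylGroup D).inv_mem hw
  rcases D.pos_or_neg p (D.neg_mem ((D.apply_mem_iff hW).mpr (D.pos_subset hη'))) with hp | hp
  · have hpC := ih _ (h ▸ hwp ▸ D.rootHt_lt_of_add_eq hη' hεP hη (sub_add_cancel _ ε))
      (D.mem_negSet.mpr ⟨hp, hwp ▸ hη'⟩) rfl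
    rcases D.pos_or_neg q (D.neg_mem ((D.apply_mem_iff hW).mpr (D.simple_mem hε))) with hq | hq
    · have hqC := ih _ (h ▸ hwq ▸ D.rootHt_lt_of_add_eq hεP hη' hη (add_sub_cancel ε _))
        (D.mem_negSet.mpr ⟨hq, hwq ▸ hεP⟩) rfl
      rw [hαpq]
      exact add_mem_sumClosure hpC hqC (hαpq ▸ D.pos_subset hαP)
    · obtain ⟨-, m, -, hm, hmsum⟩ := mem_sumClosure.mp hpC
      refine mem_sumClosure_of_add_eq_sum hI hw hm hα hq (fun hqN => ?_)
        (by rw [hmsum, hαpq]; abel)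
      exact D.pos_not_neg ε hεP (by simpa [← hwq] using (D.mem_negSet.mp hqN).2)
  rcases D.pos_or_neg q (D.neg_mem ((D.apply_mem_iff hW).mpr (D.simple_mem hε))) with hq | hq
  · have hqI := hbd q (D.mem_negSet.mpr ⟨hq, hwq ▸ hεP⟩) (hwq ▸ hε)
    refine subset_sumClosure hYP (Finset.mem_inter.mpr ⟨hα, ?_⟩)
    simpa [hαpq, add_comm] using hI.2 q hqI (-p) hp (by simpa [hαpq, add_comm] using hαP)
  · have hsum : -p + -q = -α := by rw [hαpq]; abel
    exact absurd (hsum ▸ D.add_mem_pos hp hq (hsum ▸ D.neg_mem (D.pos_subset hαP)))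
      (D.pos_not_neg α hαP)

variable (D) in
lemma negSet_eq_sumClosure {I : Finset V} (hI : IsLowerIdealOf D.Pos I) {w : V ≃ₗ[ℚ] V}
    (hw : w ∈ WeylGroup D) (hbd : ∀ γ ∈ negSet D w, -(w γ) ∈ D.Δ → γ ∈ I) :
    negSet D w = D.sumClosure (negSet D w ∩ I) :=
  subset_antisymm (negSet_subset_sumClosure hI hw hbd)
    ((D.isBiconvex_negSet hw).sumClosure_subset Finset.inter_subset_left)

variable (D) in
lemma mem_of_negSet_eq_sumClosure {Y : Finset V} (hY : Y ⊆ D.Pos) {w : V ≃ₗ[ℚ] V}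
    (h : negSet D w = D.sumClosure Y) {γ : V} (hγ : γ ∈ negSet D w) (hγΔ : -(w γ) ∈ D.Δ) :
    γ ∈ Y := by
  rw [h] at hγ
  refine sumClosure_induction hY (P := fun σ => -(w σ) ∈ D.Δ → σ ∈ Y) (fun y hy _ => hy)
    (fun σ hσ y hy _ _ hσy => absurd hσy ?_) γ hγ hγΔ
  rw [map_add, neg_add]
  rw [← h] at hσ
  exact D.add_notMem_simple (D.mem_negSet.mp hσ).2
    (D.mem_negSet.mp (h ▸ subset_sumClosure hY hy)).2

end RootSystemData

/-- Let `I` be a lower ideal in `Φ⁺`. Then `w ↦ N(w) ∩ I` is a bijection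
from `{w ∈ W : w⁻¹(Δ) ⊆ (−I) ∪ Φ⁺}` onto the set `𝒲^I` of Weyl type subsets of `I`. -/
theorem bijOn_negSet_inter_weylType
    {V : Type} [AddCommGroup V] [Module ℚ V] (D : RootSystemData V)
    (I : Finset V) (hI : IsLowerIdealOf D.Pos I) :
    Set.BijOn (fun w : V ≃ₗ[ℚ] V => negSet D w ∩ I)
      {w : V ≃ₗ[ℚ] V | w ∈ WeylGroup D ∧
        ∀ δ ∈ D.Δ, w.symm δ ∈ (I.image fun α => -α) ∪ D.Pos}
      {Y : Finset V | IsWeylType I Y} := by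
  refine ⟨fun w hw => (D.isBiconvex_negSet hw.1).isWeylType_inter hI.1,
    fun w₁ hw₁ w₂ hw₂ h => ?_, fun Y hY => ?_⟩
  · have h₁ := D.negSet_eq_sumClosure hI hw₁.1 ((D.forall_symm_simple_mem_iff hw₁.1).mp hw₁.2)
    have h₂ := D.negSet_eq_sumClosure hI hw₂.1 ((D.forall_symm_simple_mem_iff hw₂.1).mp hw₂.2)
    exact D.eq_of_negSet_eq hw₁.1 hw₂.1 (h₁.trans ((congrArg D.sumClosure h).trans h₂.symm))
  · have hYP : Y ⊆ D.Pos := hY.1.trans hI.1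
    obtain ⟨w, hw, hwY⟩ := (hY.isBiconvex_sumClosure hI).exists_negSet_eq
    refine ⟨w, ⟨hw, (D.forall_symm_simple_mem_iff hw).mpr fun γ hγ hγΔ =>
      hY.1 (D.mem_of_negSet_eq_sumClosure hYP hwY hγ hγΔ)⟩, ?_⟩
    show negSet D w ∩ I = Y
    rw [hwY, hY.sumClosure_inter hI]
end
end

section
/- Let Θ ⊆ Δ and let I be a Θ-ideal in Φ⁺. Then the W_Θ-action on Der R preserves the logarithmic derivation module D(A_I): for every w ∈ W_Θ and every ψ ∈ D(A_I), the derivation w·ψ also lies in D(A_I). -/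
open scoped Classical

noncomputable section

variable (V : Type) [AddCommGroup V] [Module ℚ V]

variable {V}

variable {V : Type} [AddCommGroup V] [Module ℚ V] {κ : Type}

/-- The embedding of `V` as the degree-one part of the symmetric algebra
`R = Sym(V)`, realized as the polynomial ring `ℚ[X_i : i ∈ κ]` on a basis of `V`. -/
noncomputable def embR (bV : Module.Basis κ ℚ V) : V →ₗ[ℚ] MvPolynomial κ ℚ :=
  (Finsupp.linearCombination ℚ (MvPolynomial.X : κ → MvPolynomial κ ℚ)).comp
    bV.repr.toLinearMap

/-- The algebra endomorphism of `R = Sym(V)` extending a linear automorphism `w` of `V`. -/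
noncomputable def liftW (bV : Module.Basis κ ℚ V) (w : V ≃ₗ[ℚ] V) :
    MvPolynomial κ ℚ →ₐ[ℚ] MvPolynomial κ ℚ :=
  MvPolynomial.aeval fun i => embR bV (w (bV i))

/-- `ψ : R → R` is a `ℚ`-linear derivation of `R`. -/
def IsDerivFn (ψ : MvPolynomial κ ℚ → MvPolynomial κ ℚ) : Prop :=
  IsLinearMap ℚ ψ ∧ ∀ f g, ψ (f * g) = ψ f * g + f * ψ g

/-- `ψ` belongs to the logarithmic derivation module `D(A_I)` of the ideal
arrangement `A_I`: it is a derivation of `R` with `ψ(α) ∈ Rα` for all `α ∈ I`. -/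
def InLogDer (bV : Module.Basis κ ℚ V) (I : Finset V)
    (ψ : MvPolynomial κ ℚ → MvPolynomial κ ℚ) : Prop :=
  IsDerivFn ψ ∧ ∀ α ∈ I, ∃ r : MvPolynomial κ ℚ, ψ (embR bV α) = r * embR bV α

/-- The action of `w` on derivations: `(w·ψ)(f) = w(ψ(w⁻¹ f))`. -/
noncomputable def actDer (bV : Module.Basis κ ℚ V) (w : V ≃ₗ[ℚ] V)
    (ψ : MvPolynomial κ ℚ → MvPolynomial κ ℚ) :
    MvPolynomial κ ℚ → MvPolynomial κ ℚ :=
  fun f => liftW bV w (ψ (liftW bV w⁻¹ f))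

/-- The quadratic form on `V` associated to a polynomial `Q ∈ R`, by evaluation in the
coordinates of the given basis. -/
noncomputable def polyQuadForm (bV : Module.Basis κ ℚ V) (Q : MvPolynomial κ ℚ) (v : V) : ℚ :=
  MvPolynomial.eval (fun i => bV.repr v i) Q

/-- The symmetric bilinear form associated to the quadratic form of `Q` is nondegenerate. -/
def NondegQuad (bV : Module.Basis κ ℚ V) (Q : MvPolynomial κ ℚ) : Prop :=
  ∀ v : V, (∀ u : V,
    polyQuadForm bV Q (v + u) - polyQuadForm bV Q v - polyQuadForm bV Q u = 0) → v = 0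

/-!
`W_Θ` is generated by the simple reflections `s_δ`, `δ ∈ Θ`, so it suffices that each of them
maps `I` into `I ∪ -I`. It sends `δ` to `-δ ∈ -I`. For `α ∈ I` with `α ≠ δ`, the `δ`-string from
`α` to `s_δ α = α - ⟨α, δ^∨⟩ δ` is unbroken and consists of positive roots (each keeps a positive
coefficient of `α` at a simple root other than `δ`), so `s_δ α` is reached from `α` by repeatedly
subtracting `δ` (lower ideal) or adding `δ ∈ Φ⁺_Θ` (upper ideal with respect to `Θ`).
Then for `w ∈ W_Θ` and `α ∈ I`, `w⁻¹ α = ±β` with `β ∈ I`, so `ψ(w⁻¹ α) ∈ R · w⁻¹ α` and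
`(w·ψ)(α) = w(ψ(w⁻¹ α)) ∈ R · α`.
-/

open Set Module
open scoped Pointwise

namespace RootSystemData

theorem finiteDimensional (D : RootSystemData V) : FiniteDimensional ℚ V :=
  Module.finite_def.mpr ⟨D.Φ, D.span_eq_top⟩

variable (D : RootSystemData V)

theorem mapsTo_preReflection {α : V} (hα : α ∈ D.Φ) :
    MapsTo (preReflection α (D.coroot α)) (D.Φ : Set V) D.Φ :=
  fun β hβ => D.reflect_mem α hα β hβ

theorem coroot_injOn : InjOn D.coroot D.Φ := fun α hα β hβ h =>
  have : IsAddTorsionFree V := .of_isTorsionFree ℚ V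
  eq_of_mapsTo_reflection_of_mem D.Φ.finite_toSet (D.coroot_self α hα) (D.coroot_self β hβ)
    (h ▸ D.coroot_self α hα) (h ▸ D.coroot_self β hβ) (D.mapsTo_preReflection hα)
    (D.mapsTo_preReflection hβ) hβ

def toRootPairing [FiniteDimensional ℚ V] : RootPairing D.Φ ℚ V (Dual ℚ V) :=
  .mk'' (Dual.eval ℚ V) (.subtype _)
    ⟨fun α => D.coroot α, fun α β h => Subtype.ext (D.coroot_injOn α.2 β.2 h)⟩
    (fun α => D.coroot_self α α.2)
    (by
      rintro α - ⟨β, rfl⟩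
      exact ⟨⟨_, D.reflect_mem α α.2 β β.2⟩, rfl⟩)
    (by simpa using D.span_eq_top)

instance [FiniteDimensional ℚ V] : D.toRootPairing.IsCrystallographic :=
  ⟨fun α β => (D.crystallographic β β.2 α α.2).imp fun _ h => h.symm⟩

@[simp]
theorem toRootPairing_root [FiniteDimensional ℚ V] (α : D.Φ) : D.toRootPairing.root α = α :=
  rfl

theorem range_toRootPairing_root [FiniteDimensional ℚ V] :
    range D.toRootPairing.root = D.Φ :=
  Subtype.range_coe

variable {D}

theorem linearIndependent_pair_of_ne {α δ : V} (hα : α ∈ D.Φ) (hδ : δ ∈ D.Φ) (hαδ : α ≠ δ)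
    (hαδ' : α ≠ -δ) : LinearIndependent ℚ ![δ, α] := by
  refine (LinearIndependent.pair_iff' (D.root_ne_zero δ hδ)).mpr fun c hc => ?_
  rcases D.reduced δ hδ c (hc ▸ hα) with rfl | rfl
  · exact hαδ (by simp [← hc])
  · exact hαδ' (by simp [← hc])

theorem sub_zsmul_mem_of_mem_uIcc {α δ : V} (hα : α ∈ D.Φ) (hδ : δ ∈ D.Φ) (hαδ : α ≠ δ)
    (hαδ' : α ≠ -δ) {m z : ℤ} (hm : α - m • δ ∈ D.Φ) (hz : z ∈ uIcc 0 m) :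
    α - z • δ ∈ D.Φ := by
  have := D.finiteDimensional
  have hS := D.toRootPairing.setOfPred_root_sub_zsmul_mem_eq_Icc (i := ⟨δ, hδ⟩) (j := ⟨α, hα⟩)
    (linearIndependent_pair_of_ne hα hδ hαδ hαδ')
  simp only [toRootPairing_root, range_toRootPairing_root] at hS
  have hconn : OrdConnected {k : ℤ | α - k • δ ∈ (D.Φ : Set V)} := hS ▸ ordConnected_Icc
  exact hconn.uIcc_subset (by simpa using hα) hm hz

theorem mem_pos_of_coeff_pos {β : V} (hβ : β ∈ D.Φ) {c : V → ℚ} (hc : β = ∑ γ ∈ D.Δ, c γ • γ)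
    {γ₀ : V} (hγ₀ : γ₀ ∈ D.Δ) (hpos : 0 < c γ₀) : β ∈ D.Pos := by
  refine (D.pos_or_neg β hβ).resolve_right fun hneg => ?_
  have hsum : ∑ γ ∈ D.Δ, (c γ + D.coeff (-β) γ) • γ = 0 := by
    simp only [add_smul, Finset.sum_add_distrib, ← hc, ← D.pos_combo _ hneg, add_neg_cancel]
  have := (linearIndepOn_finset_iff (v := id)).mp D.simple_indep _ hsum γ₀ hγ₀
  have : (0 : ℚ) ≤ D.coeff (-β) γ₀ := Nat.cast_nonneg _
  linarith

theorem exists_coeff_pos_of_ne {α δ : V} (hα : α ∈ D.Pos) (hδ : δ ∈ D.Δ) (hαδ : α ≠ δ) :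
    ∃ γ ∈ D.Δ, γ ≠ δ ∧ 0 < D.coeff α γ := by
  by_contra! h
  have hαeq : α = (D.coeff α δ : ℚ) • δ := by
    conv_lhs => rw [D.pos_combo α hα]
    exact Finset.sum_eq_single_of_mem δ hδ fun γ hγ hne => by simp [Nat.le_zero.mp (h γ hγ hne)]
  rcases D.reduced δ (D.pos_subset (D.simple_subset hδ)) _ (hαeq ▸ D.pos_subset hα) with h1 | h1
  · exact hαδ (by rw [hαeq, h1, one_smul])
  · have : (0 : ℚ) ≤ D.coeff α δ := Nat.cast_nonneg _
    linarith

theorem sub_smul_mem_pos {α δ : V} (hα : α ∈ D.Pos) (hδ : δ ∈ D.Δ) (hαδ : α ≠ δ) {t : ℚ}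
    (h : α - t • δ ∈ D.Φ) : α - t • δ ∈ D.Pos := by
  obtain ⟨γ, hγ, hγδ, hpos⟩ := exists_coeff_pos_of_ne hα hδ hαδ
  refine mem_pos_of_coeff_pos h (c := fun γ => D.coeff α γ - if γ = δ then t else 0) ?_ hγ
    (by simpa [hγδ] using hpos)
  simp [sub_smul, Finset.sum_sub_distrib, ite_smul, hδ, ← D.pos_combo α hα]

end RootSystemData

theorem IsLowerIdealOf.sub_nsmul_mem {G : Type} [AddCommGroup G] {Pos I : Finset G}
    (hI : IsLowerIdealOf Pos I) {α δ : G} (hα : α ∈ I) (hδ : δ ∈ Pos) {n : ℕ}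
    (hstr : ∀ k ≤ n, α - k • δ ∈ Pos) : α - n • δ ∈ I := by
  induction n with
  | zero => simpa using hα
  | succ n ih =>
    have hlast := hstr _ le_rfl
    rw [succ_nsmul, ← sub_sub] at hlast ⊢
    exact hI.2 _ (ih fun k hk => hstr k (by omega)) δ hδ hlast

theorem IsUpperIdealWrt.add_nsmul_mem {Pos Θ I : Finset V} (hI : IsUpperIdealWrt Pos Θ I)
    {α δ : V} (hα : α ∈ I) (hδ : δ ∈ posThetaOf Pos Θ) {n : ℕ}
    (hstr : ∀ k ≤ n, α + k • δ ∈ Pos) : α + n • δ ∈ I := by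
  induction n with
  | zero => simpa using hα
  | succ n ih =>
    have hlast := hstr _ le_rfl
    rw [succ_nsmul, ← add_assoc] at hlast ⊢
    exact hI _ (ih fun k hk => hstr k (by omega)) δ hδ hlast

theorem mem_posThetaOf_of_mem {Pos Θ : Finset V} {δ : V} (hδ : δ ∈ Pos) (hδΘ : δ ∈ Θ) :
    δ ∈ posThetaOf Pos Θ :=
  Finset.mem_filter.mpr ⟨hδ, Pi.single δ 1, by simp [Pi.single_apply, hδΘ]⟩

namespace IsReflectionOf

variable {D : RootSystemData V} {δ : V} {g : V ≃ₗ[ℚ] V}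

theorem apply_self (hg : IsReflectionOf D δ g) (hδ : δ ∈ D.Φ) : g δ = -δ := by
  rw [hg, D.coroot_self δ hδ]
  module

theorem inv_eq (hg : IsReflectionOf D δ g) (hδ : δ ∈ D.Φ) : g⁻¹ = g :=
  inv_eq_of_mul_eq_one_right <| LinearEquiv.ext fun x => by
    change g (g x) = x
    rw [hg (g x), hg x, map_sub, map_smul, D.coroot_self δ hδ]
    module

end IsReflectionOf

namespace RootSystemData

variable {D : RootSystemData V} {Θ I : Finset V}

theorem reflection_mem_of_isThetaIdeal (hΘ : Θ ⊆ D.Δ) (hI : IsThetaIdealOf D.Pos Θ I)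
    {δ α : V} (hδ : δ ∈ Θ) (hα : α ∈ I) (hαδ : α ≠ δ) : α - D.coroot δ α • δ ∈ I := by
  have hδP := D.simple_subset (hΘ hδ)
  have hαP := hI.1.1 hα
  have hαδ' : α ≠ -δ := fun h => D.pos_not_neg δ hδP (h ▸ hαP)
  obtain ⟨m, hm⟩ := D.crystallographic δ (D.pos_subset hδP) α (D.pos_subset hαP)
  have hstr : ∀ z ∈ uIcc 0 m, α - z • δ ∈ D.Pos := fun z hz => by
    have hend : α - m • δ ∈ D.Φ := by
      rw [← Int.cast_smul_eq_zsmul ℚ, ← hm]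
      exact D.reflect_mem δ (D.pos_subset hδP) α (D.pos_subset hαP)
    have := sub_zsmul_mem_of_mem_uIcc (D.pos_subset hαP) (D.pos_subset hδP) hαδ hαδ' hend hz
    rw [← Int.cast_smul_eq_zsmul ℚ] at this ⊢
    exact sub_smul_mem_pos hαP (hΘ hδ) hαδ this
  rw [hm, Int.cast_smul_eq_zsmul]
  rcases m.eq_nat_or_neg with ⟨n, rfl | rfl⟩
  · simp only [natCast_zsmul] at hstr ⊢
    exact hI.1.sub_nsmul_mem hα hδP fun k hk => by
      simpa using hstr k (mem_uIcc.mpr (Or.inl ⟨by positivity, by exact_mod_cast hk⟩))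
  · simp only [neg_smul, natCast_zsmul, sub_neg_eq_add] at hstr ⊢
    exact hI.2.1.add_nsmul_mem hα (mem_posThetaOf_of_mem hδP hδ) fun k hk => by
      simpa using hstr (-k) (mem_uIcc.mpr (Or.inr ⟨by omega, by omega⟩))

theorem reflection_mapsTo_of_isThetaIdeal (hΘ : Θ ⊆ D.Δ) (hI : IsThetaIdealOf D.Pos Θ I)
    {δ : V} (hδ : δ ∈ Θ) {g : V ≃ₗ[ℚ] V} (hg : IsReflectionOf D δ g) :
    MapsTo g (I ∪ -I : Set V) (I ∪ -I) := by
  have image_mem : ∀ α ∈ I, g α ∈ (I ∪ -I : Set V) := fun α hα => by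
    by_cases hαδ : α = δ
    · subst hαδ
      refine Or.inr ?_
      rw [mem_neg, hg.apply_self (D.pos_subset (D.simple_subset (hΘ hδ))), neg_neg]
      exact hα
    · rw [hg]
      exact Or.inl (reflection_mem_of_isThetaIdeal hΘ hI hδ hα hαδ)
  rintro x (hx | hx)
  · exact image_mem x hx
  · have := image_mem _ hx
    rw [map_neg] at this
    rcases this with h | h
    exacts [Or.inr h, Or.inl (by simpa using h)]

theorem mapsTo_of_mem_WThetaGroup (hΘ : Θ ⊆ D.Δ) (hI : IsThetaIdealOf D.Pos Θ I)
    {w : V ≃ₗ[ℚ] V} (hw : w ∈ WThetaGroup D Θ) : MapsTo w (I ∪ -I : Set V) (I ∪ -I) := by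
  induction hw using Subgroup.closure_induction'' with
  | mem g hg =>
    obtain ⟨δ, hδ, hg⟩ := hg
    exact reflection_mapsTo_of_isThetaIdeal hΘ hI hδ hg
  | inv_mem g hg =>
    obtain ⟨δ, hδ, hg⟩ := hg
    rw [hg.inv_eq (D.pos_subset (D.simple_subset (hΘ hδ)))]
    exact reflection_mapsTo_of_isThetaIdeal hΘ hI hδ hg
  | one => exact mapsTo_id _
  | mul u v _ _ hu hv => exact hu.comp hv

end RootSystemData

section LogDer

variable (bV : Module.Basis κ ℚ V)

theorem embR_basis (i : κ) : embR bV (bV i) = MvPolynomial.X i := by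
  simp [embR]

theorem liftW_X (w : V ≃ₗ[ℚ] V) (i : κ) :
    liftW bV w (MvPolynomial.X i) = embR bV (w (bV i)) :=
  MvPolynomial.aeval_X _ i

theorem liftW_embR (w : V ≃ₗ[ℚ] V) (x : V) : liftW bV w (embR bV x) = embR bV (w x) := by
  refine LinearMap.congr_fun (bV.ext fun i => ?_ :
    (liftW bV w).toLinearMap ∘ₗ embR bV = embR bV ∘ₗ w.toLinearMap) x
  simp [embR_basis, liftW]

theorem liftW_comp_liftW (w u : V ≃ₗ[ℚ] V) :
    (liftW bV w).comp (liftW bV u) = liftW bV (w * u) :=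
  MvPolynomial.algHom_ext fun i => by
    rw [AlgHom.comp_apply, liftW_X, liftW_embR, liftW_X, LinearEquiv.mul_apply]

theorem liftW_one : liftW bV 1 = AlgHom.id ℚ (MvPolynomial κ ℚ) :=
  MvPolynomial.algHom_ext fun i => by
    rw [liftW_X]
    exact embR_basis bV i

theorem liftW_liftW_inv (w : V ≃ₗ[ℚ] V) (f : MvPolynomial κ ℚ) :
    liftW bV w (liftW bV w⁻¹ f) = f := by
  rw [← AlgHom.comp_apply, liftW_comp_liftW, mul_inv_cancel, liftW_one, AlgHom.id_apply]

variable {bV} {ψ : MvPolynomial κ ℚ → MvPolynomial κ ℚ}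

theorem IsDerivFn.actDer (hψ : IsDerivFn ψ) (w : V ≃ₗ[ℚ] V) : IsDerivFn (actDer bV w ψ) := by
  refine ⟨((liftW bV w).toLinearMap ∘ₗ hψ.1.mk' ψ ∘ₗ (liftW bV w⁻¹).toLinearMap).isLinear,
    fun f g => ?_⟩
  change liftW bV w (ψ (liftW bV w⁻¹ (f * g))) = _
  rw [map_mul, hψ.2, map_add, map_mul, map_mul, liftW_liftW_inv, liftW_liftW_inv]
  rfl

theorem InLogDer.dvd_of_mem {I : Finset V} (hψ : InLogDer bV I ψ) {x : V}
    (hx : x ∈ (I ∪ -I : Set V)) : embR bV x ∣ ψ (embR bV x) := by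
  rcases hx with hx | hx
  · obtain ⟨r, hr⟩ := hψ.2 x hx
    exact Dvd.intro_left r hr.symm
  · obtain ⟨r, hr⟩ := hψ.2 (-x) hx
    rw [map_neg, hψ.1.1.map_neg, mul_neg, neg_inj] at hr
    exact Dvd.intro_left r hr.symm

theorem InLogDer.actDer {I I' : Finset V} (hψ : InLogDer bV I ψ) {w : V ≃ₗ[ℚ] V}
    (hw : MapsTo ⇑w⁻¹ I' (I ∪ -I : Set V)) : InLogDer bV I' (actDer bV w ψ) := by
  refine ⟨hψ.1.actDer w, fun α hα => ?_⟩
  obtain ⟨r, hr⟩ := map_dvd (liftW bV w) (hψ.dvd_of_mem (hw hα))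
  rw [liftW_embR, show w (w⁻¹ α) = α from w.apply_symm_apply α] at hr
  refine ⟨r, ?_⟩
  change liftW bV w (ψ (liftW bV w⁻¹ (embR bV α))) = _
  rw [liftW_embR, hr, mul_comm]

end LogDer

/-- Let `Θ ⊆ Δ` and let `I` be a `Θ`-ideal in `Φ⁺`. Then the
`W_Θ`-action on `Der R` preserves the logarithmic derivation module `D(A_I)`:
for every `w ∈ W_Θ` and every `ψ ∈ D(A_I)`, the derivation `w·ψ` also lies in `D(A_I)`. -/
theorem actDer_mem_logDer
    (D : RootSystemData V) (bV : Module.Basis κ ℚ V)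
    (Θ : Finset V) (hΘ : Θ ⊆ D.Δ)
    (I : Finset V) (hI : IsThetaIdealOf D.Pos Θ I)
    (w : V ≃ₗ[ℚ] V) (hw : w ∈ WThetaGroup D Θ)
    (ψ : MvPolynomial κ ℚ → MvPolynomial κ ℚ) (hψ : InLogDer bV I ψ) :
    InLogDer bV I (actDer bV w ψ) :=
  hψ.actDer fun _ hα => RootSystemData.mapsTo_of_mem_WThetaGroup hΘ hI (inv_mem hw) (Or.inl hα)
end
end
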